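/- arXiv:2605.04725 — 8 statements merged into one kernel-verified Lean document; each statement's English description precedes it below -/
import Mathlib

section
/- Let T be a tree containing a vertex v with neighbors u and w, where deleting v splits T into a component P containing u, a component Q containing w, and components forming a set M of vertices attached to v via neighbors v_1,...,v_t (t ≥ 1). Let T_u be the tree obtained from T by detaching the edges from v to v_1,...,v_t and reattaching v_1,...,v_t to u, and define T_w analogously with w. Then W(T) < max{W(T_u), W(T_w)}, where W denotes the Wiener index (the sum of distances over all unordered pairs of vertices). -/
open SimpleGraph Finset

/-- The Wiener index: sum of distances over unordered pairs (as a rational). -/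
noncomputable def wiener {V : Type*} [Fintype V] (G : SimpleGraph V) : ℚ :=
  (∑ u : V, ∑ v : V, (G.dist u v : ℚ)) / 2

/-- The average distance `μ(G) = W(G) / C(n,2)`. -/
noncomputable def avgDist {V : Type*} [Fintype V] (G : SimpleGraph V) : ℚ :=
  wiener G / ((Fintype.card V).choose 2 : ℚ)

/-- `a` is the independence number of `G`. -/
def IsIndepNum {V : Type*} (G : SimpleGraph V) (a : ℕ) : Prop :=
  IsGreatest {m | ∃ s : Finset V, s.card = m ∧ ∀ x ∈ s, ∀ y ∈ s, ¬ G.Adj x y} a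

/-- The tree `H_{a,b}`: a path on `a` vertices with `⌊b/2⌋` pendent vertices attached to
one end and `⌈b/2⌉` pendent vertices attached to the other end. -/
def Hab (a b : ℕ) : SimpleGraph (Fin (a + b)) :=
  SimpleGraph.fromRel (fun i j =>
    ((i : ℕ) + 1 = (j : ℕ) ∧ (j : ℕ) < a) ∨
    (a ≤ (i : ℕ) ∧ (i : ℕ) < a + b / 2 ∧ (j : ℕ) = 0) ∨
    (a + b / 2 ≤ (i : ℕ) ∧ (j : ℕ) = a - 1))

/-
Summing over ordered pairs, it suffices that `2 d_T(x, y) ≤ d_{T_u}(x, y) + d_{T_w}(x, y)` for all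
`x, y`, strictly for `x = v₁, y = v`. Moving the branches `M` changes no distance inside `M` or
inside its complement, and for `x ∈ M`, `y ∉ M` it turns `d(x, v) + d(v, y)` into
`d(x, v) + d(u, y)`. Since `y` lies in the branch at `v` of at most one of `u`, `w`, we have
`2 d(v, y) ≤ d(u, y) + d(w, y)`. The lower bounds on distances in `T_u` come from functions that
grow by at most one along each edge of `T_u`.
-/

namespace SimpleGraph

variable {V ι : Type*} {G T : SimpleGraph V} {v a x y : V} {vs : ι → V}

lemma Walk.le_add_length (f : V → ℕ) (hf : ∀ a b, G.Adj a b → f b ≤ f a + 1) :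
    ∀ {x y : V} (p : G.Walk x y), f x ≤ f y + p.length
  | _, _, .nil => by simp
  | _, _, .cons h p => by
    have := hf _ _ h.symm
    have := p.le_add_length f hf
    rw [Walk.length_cons]
    omega

lemma Reachable.le_add_dist (hr : G.Reachable x y) (f : V → ℕ)
    (hf : ∀ a b, G.Adj a b → f b ≤ f a + 1) : f y ≤ f x + G.dist x y := by
  obtain ⟨p, hp⟩ := hr.symm.exists_walk_length_eq_dist
  simpa [hp, dist_comm] using p.le_add_length f hf

lemma dist_le_dist_add_one_of_adj {a b : V} (h : G.Adj a b) (z : V) :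
    G.dist z b ≤ G.dist z a + 1 := by
  simpa [dist_eq_one_iff_adj.mpr h] using h.reachable.dist_triangle_right z

lemma Walk.reachable_deleteIncidenceSet (p : T.Walk x y) (hv : v ∉ p.support) :
    (T.deleteIncidenceSet v).Reachable x y :=
  ⟨p.toDeleteEdges _ fun _ he hinc => hv (p.mem_support_of_mem_edges he hinc.2)⟩

lemma eq_of_reachable_deleteIncidenceSet (h : (T.deleteIncidenceSet v).Reachable v y) :
    v = y := by
  obtain ⟨p⟩ := h
  cases p with
  | nil => rfl
  | cons h _ => exact absurd rfl (deleteIncidenceSet_adj.mp h).2.1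

lemma Connected.dist_eq_add_of_not_reachable (hc : T.Connected)
    (h : ¬ (T.deleteIncidenceSet v).Reachable x y) :
    T.dist x y = T.dist x v + T.dist v y := by
  classical
  obtain ⟨p, hp⟩ := hc.exists_walk_length_eq_dist x y
  have hv : v ∈ p.support := by_contra fun hv => h (p.reachable_deleteIncidenceSet hv)
  refine le_antisymm hc.dist_triangle ?_
  calc T.dist x v + T.dist v y ≤ (p.takeUntil v hv).length + (p.dropUntil v hv).length :=
        add_le_add (dist_le _) (dist_le _)
    _ = T.dist x y := by rw [← Walk.length_append, p.take_spec hv, hp]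

lemma Connected.exists_adj_reachable_deleteIncidenceSet (hc : T.Connected) (hy : v ≠ y) :
    ∃ a, T.Adj v a ∧ (T.deleteIncidenceSet v).Reachable a y := by
  obtain ⟨p, hp, -⟩ := hc.exists_path_of_dist v y
  cases p with
  | nil => exact absurd rfl hy
  | cons h q =>
    rw [Walk.cons_isPath_iff] at hp
    exact ⟨_, h, q.reachable_deleteIncidenceSet hp.2⟩

-- `s(v, a)` is a bridge, yet `v - b ~ a` avoids it.
lemma IsAcyclic.not_reachable_deleteIncidenceSet (hT : T.IsAcyclic) {a b : V} (hab : a ≠ b)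
    (ha : T.Adj v a) (hb : T.Adj v b) : ¬ (T.deleteIncidenceSet v).Reachable a b := by
  intro hr
  apply isBridge_iff.mp (isAcyclic_iff_forall_adj_isBridge.mp hT ha)
  have hvb : (T.deleteEdges {s(v, a)}).Adj v b := by
    simp [deleteEdges_adj, hb, hab.symm, hb.ne.symm]
  have hle : T.deleteIncidenceSet v ≤ T.deleteEdges {s(v, a)} :=
    deleteEdges_anti (by simpa [incidenceSet] using ha)
  exact hvb.reachable.trans (hr.symm.mono hle)

lemma IsTree.two_mul_dist_le_dist_add_dist (hT : T.IsTree) {u w : V} (huw : u ≠ w)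
    (hu : T.Adj v u) (hw : T.Adj v w) (y : V) :
    2 * T.dist v y ≤ T.dist u y + T.dist w y := by
  have hc := hT.connected
  have hdu : T.dist v y ≤ T.dist u y + 1 := by
    rw [dist_comm, dist_comm (u := u)]; exact dist_le_dist_add_one_of_adj hu.symm y
  have hdw : T.dist v y ≤ T.dist w y + 1 := by
    rw [dist_comm, dist_comm (u := w)]; exact dist_le_dist_add_one_of_adj hw.symm y
  by_cases hru : (T.deleteIncidenceSet v).Reachable u y
  · have hrw : ¬ (T.deleteIncidenceSet v).Reachable w y := fun hrw =>
      hT.isAcyclic.not_reachable_deleteIncidenceSet huw hu hw (hru.trans hrw.symm)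
    have := hc.dist_eq_add_of_not_reachable hrw
    rw [dist_eq_one_iff_adj.mpr hw.symm] at this
    omega
  · have := hc.dist_eq_add_of_not_reachable hru
    rw [dist_eq_one_iff_adj.mpr hu.symm] at this
    omega

/-- `M` in the paper's notation. -/
def branchUnion (T : SimpleGraph V) (v : V) (vs : ι → V) : Set V :=
  {y | ∃ i, (T.deleteIncidenceSet v).Reachable (vs i) y}

/-- `T_a` in the paper's notation. -/
def moveBranches (T : SimpleGraph V) (v a : V) (vs : ι → V) : SimpleGraph V :=
  T.deleteEdges {e | ∃ i, e = s(v, vs i)} ⊔ fromEdgeSet {e | ∃ i, e = s(a, vs i)}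

open Classical in
/-- The distances in `T.moveBranches v a vs`; only the lower bound `movedDist_le_dist` is needed. -/
noncomputable def movedDist (T : SimpleGraph V) (v a : V) (vs : ι → V) (x y : V) : ℕ :=
  if (x ∈ T.branchUnion v vs ↔ y ∈ T.branchUnion v vs) then T.dist x y
  else if x ∈ T.branchUnion v vs then T.dist x v + T.dist a y
  else T.dist x a + T.dist v y

lemma mem_branchUnion (i : ι) : vs i ∈ T.branchUnion v vs := ⟨i, .rfl⟩

lemma center_notMem_branchUnion (hvs : ∀ i, T.Adj v (vs i)) : v ∉ T.branchUnion v vs :=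
  fun ⟨i, hr⟩ => (hvs i).ne (eq_of_reachable_deleteIncidenceSet hr.symm)

lemma IsAcyclic.notMem_branchUnion (hT : T.IsAcyclic) (hvs : ∀ i, T.Adj v (vs i))
    (ha : T.Adj v a) (hne : ∀ i, vs i ≠ a) : a ∉ T.branchUnion v vs :=
  fun ⟨i, hr⟩ => hT.not_reachable_deleteIncidenceSet (hne i) (hvs i) ha hr

lemma Connected.dist_eq_add_of_mem_branchUnion (hc : T.Connected) (hx : x ∈ T.branchUnion v vs)
    (hy : y ∉ T.branchUnion v vs) : T.dist x y = T.dist x v + T.dist v y := by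
  obtain ⟨i, hx⟩ := hx
  exact hc.dist_eq_add_of_not_reachable fun hxy => hy ⟨i, hx.trans hxy⟩

lemma IsAcyclic.exists_eq_of_adj_of_mem_branchUnion (hT : T.IsAcyclic)
    (hvs : ∀ i, T.Adj v (vs i)) {b c : V} (hbc : T.Adj b c) (hb : b ∈ T.branchUnion v vs)
    (hc : c ∉ T.branchUnion v vs) : ∃ i, s(b, c) = s(v, vs i) := by
  have hbv : b ≠ v := fun h => center_notMem_branchUnion hvs (h ▸ hb)
  obtain ⟨i, hi⟩ := hb
  by_cases hcv : c = v
  · subst hcv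
    by_contra! hne
    exact hT.not_reachable_deleteIncidenceSet (fun h => hne i (by rw [h, Sym2.eq_swap]))
      (hvs i) hbc.symm hi
  · exact absurd ⟨i, hi.trans (deleteIncidenceSet_adj.mpr ⟨hbc, hbv, hcv⟩).reachable⟩ hc

lemma moveBranches_adj {b c : V} :
    (T.moveBranches v a vs).Adj b c ↔
      T.Adj b c ∧ (∀ i, s(b, c) ≠ s(v, vs i)) ∨ (∃ i, s(b, c) = s(a, vs i)) ∧ b ≠ c := by
  simp [moveBranches]

lemma moveBranches_adj_center {c : V} (hc : T.Adj v c) (hne : ∀ i, vs i ≠ c) :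
    (T.moveBranches v a vs).Adj v c := by
  refine moveBranches_adj.mpr (.inl ⟨hc, fun i hi => ?_⟩)
  rcases Sym2.eq_iff.mp hi with ⟨-, h⟩ | ⟨-, h⟩
  · exact hne i h.symm
  · exact hc.ne h.symm

lemma deleteIncidenceSet_le_moveBranches : T.deleteIncidenceSet v ≤ T.moveBranches v a vs := by
  intro b c h
  obtain ⟨hbc, hb, hc⟩ := deleteIncidenceSet_adj.mp h
  refine moveBranches_adj.mpr (.inl ⟨hbc, fun i hi => ?_⟩)
  rcases Sym2.eq_iff.mp hi with ⟨h, -⟩ | ⟨-, h⟩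
  · exact hb h
  · exact hc h

lemma Connected.moveBranches_reachable (hc : T.Connected) (ha : T.Adj v a)
    (hne : ∀ i, vs i ≠ a) (x y : V) : (T.moveBranches v a vs).Reachable x y := by
  suffices h : ∀ y, (T.moveBranches v a vs).Reachable v y from (h x).symm.trans (h y)
  intro y
  obtain rfl | hy := eq_or_ne v y
  · rfl
  obtain ⟨c, hvc, hcy⟩ := hc.exists_adj_reachable_deleteIncidenceSet hy
  refine .trans ?_ (hcy.mono deleteIncidenceSet_le_moveBranches)
  by_cases hci : ∃ i, vs i = c
  · obtain ⟨i, rfl⟩ := hci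
    have hai : (T.moveBranches v a vs).Adj a (vs i) :=
      moveBranches_adj.mpr (.inr ⟨⟨i, rfl⟩, (hne i).symm⟩)
    exact (moveBranches_adj_center ha hne).reachable.trans hai.reachable
  · exact (moveBranches_adj_center hvc fun i h => hci ⟨i, h⟩).reachable

lemma IsAcyclic.movedDist_le_movedDist_add_one (hT : T.IsAcyclic) (hvs : ∀ i, T.Adj v (vs i))
    (ha : T.Adj v a) (hne : ∀ i, vs i ≠ a) {b c : V} (hbc : (T.moveBranches v a vs).Adj b c) :
    T.movedDist v a vs x c ≤ T.movedDist v a vs x b + 1 := by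
  rcases moveBranches_adj.mp hbc with ⟨hbc, hkept⟩ | ⟨⟨i, hi⟩, -⟩
  · have hside : b ∈ T.branchUnion v vs ↔ c ∈ T.branchUnion v vs := by
      constructor <;> intro h <;> by_contra h'
      · obtain ⟨i, hi⟩ := hT.exists_eq_of_adj_of_mem_branchUnion hvs hbc h h'
        exact hkept i hi
      · obtain ⟨i, hi⟩ := hT.exists_eq_of_adj_of_mem_branchUnion hvs hbc.symm h h'
        exact hkept i (by rw [Sym2.eq_swap, hi])
    have := dist_le_dist_add_one_of_adj hbc x
    have := dist_le_dist_add_one_of_adj hbc a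
    have := dist_le_dist_add_one_of_adj hbc v
    unfold movedDist
    split_ifs <;> first | omega | tauto
  · have hiM : vs i ∈ T.branchUnion v vs := mem_branchUnion i
    have haM := hT.notMem_branchUnion hvs ha hne
    have := dist_le_dist_add_one_of_adj (hvs i) x
    have := dist_le_dist_add_one_of_adj (hvs i).symm x
    have := dist_eq_one_iff_adj.mpr (hvs i)
    rcases Sym2.eq_iff.mp hi with ⟨rfl, rfl⟩ | ⟨rfl, rfl⟩ <;>
    · unfold movedDist
      split_ifs <;> first | omega | (simp only [dist_self] at *; omega) | tauto

lemma IsTree.movedDist_le_dist (hT : T.IsTree) (hvs : ∀ i, T.Adj v (vs i)) (ha : T.Adj v a)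
    (hne : ∀ i, vs i ≠ a) : T.movedDist v a vs x y ≤ (T.moveBranches v a vs).dist x y := by
  simpa [movedDist] using (hT.connected.moveBranches_reachable ha hne x y).le_add_dist
    (T.movedDist v a vs x) fun _ _ => hT.isAcyclic.movedDist_le_movedDist_add_one hvs ha hne

lemma movedDist_branch_center (hvs : ∀ i, T.Adj v (vs i)) (ha : T.Adj v a) (i : ι) :
    T.movedDist v a vs (vs i) v = 2 := by
  simp only [movedDist, mem_branchUnion, center_notMem_branchUnion hvs, iff_false,
    not_true_eq_false, if_false, if_true, dist_eq_one_iff_adj.mpr (hvs i).symm,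
    dist_eq_one_iff_adj.mpr ha.symm]

lemma IsTree.two_mul_dist_le_movedDist_add (hT : T.IsTree) {u w : V} (hu : T.Adj v u)
    (hw : T.Adj v w) (huw : u ≠ w) (x y : V) :
    2 * T.dist x y ≤ T.movedDist v u vs x y + T.movedDist v w vs x y := by
  have hc := hT.connected
  by_cases hx : x ∈ T.branchUnion v vs <;> by_cases hy : y ∈ T.branchUnion v vs
  · simp only [movedDist, hx, hy, iff_self, if_true]
    omega
  · have := hc.dist_eq_add_of_mem_branchUnion hx hy
    have := hT.two_mul_dist_le_dist_add_dist huw hu hw y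
    simp only [movedDist, hx, hy, iff_false, not_true_eq_false, if_false, if_true]
    omega
  · have := hc.dist_eq_add_of_mem_branchUnion hy hx
    have := hT.two_mul_dist_le_dist_add_dist huw hu hw x
    simp only [movedDist, hx, hy, false_iff, not_true_eq_false, if_false]
    rw [dist_comm (u := x) (v := y), dist_comm (u := x) (v := u), dist_comm (u := x) (v := w),
      dist_comm (u := v) (v := y)]
    omega
  · simp only [movedDist, hx, hy, iff_self, if_true]
    omega

end SimpleGraph

lemma wiener_lt_max_of_two_mul_dist_le {V : Type*} [Fintype V] {G H₁ H₂ : SimpleGraph V}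
    (h : ∀ x y, 2 * G.dist x y ≤ H₁.dist x y + H₂.dist x y) {x₀ y₀ : V}
    (hlt : 2 * G.dist x₀ y₀ < H₁.dist x₀ y₀ + H₂.dist x₀ y₀) :
    wiener G < max (wiener H₁) (wiener H₂) := by
  have hsum : ∑ x, ∑ y, 2 * G.dist x y < ∑ x, ∑ y, (H₁.dist x y + H₂.dist x y) :=
    sum_lt_sum (fun x _ => sum_le_sum fun y _ => h x y)
      ⟨x₀, mem_univ _, sum_lt_sum (fun y _ => h x₀ y) ⟨y₀, mem_univ _, hlt⟩⟩
  have hsumℚ := (Nat.cast_lt (α := ℚ)).mpr hsum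
  push_cast [sum_add_distrib, ← mul_sum] at hsumℚ
  have h2 : 2 * wiener G < wiener H₁ + wiener H₂ := by
    unfold wiener
    linarith
  linarith [le_max_left (wiener H₁) (wiener H₂), le_max_right (wiener H₁) (wiener H₂)]

theorem stmt0_general {V : Type*} [Fintype V] (T : SimpleGraph V) (hT : T.IsTree)
    (v u w : V) (t : ℕ) (ht : 1 ≤ t) (vs : Fin t → V)
    (hu : T.Adj v u) (hw : T.Adj v w) (huw : u ≠ w)
    (hvs : ∀ i, T.Adj v (vs i)) (hvsu : ∀ i, vs i ≠ u) (hvsw : ∀ i, vs i ≠ w) :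
    wiener T < max
      (wiener ((T.deleteEdges {e | ∃ i, e = s(v, vs i)}) ⊔
        SimpleGraph.fromEdgeSet {e | ∃ i, e = s(u, vs i)}))
      (wiener ((T.deleteEdges {e | ∃ i, e = s(v, vs i)}) ⊔
        SimpleGraph.fromEdgeSet {e | ∃ i, e = s(w, vs i)})) := by
  change wiener T < max (wiener (T.moveBranches v u vs)) (wiener (T.moveBranches v w vs))
  have hdist (x y : V) : 2 * T.dist x y ≤
      (T.moveBranches v u vs).dist x y + (T.moveBranches v w vs).dist x y :=
    (hT.two_mul_dist_le_movedDist_add hu hw huw x y).trans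
      (add_le_add (hT.movedDist_le_dist hvs hu hvsu) (hT.movedDist_le_dist hvs hw hvsw))
  let i₀ : Fin t := ⟨0, ht⟩
  refine wiener_lt_max_of_two_mul_dist_le hdist (x₀ := vs i₀) (y₀ := v) ?_
  have hT₁ := dist_eq_one_iff_adj.mpr (hvs i₀).symm
  have hu₁ := (movedDist_branch_center hvs hu i₀).symm.trans_le (hT.movedDist_le_dist hvs hu hvsu)
  have hw₁ := (movedDist_branch_center hvs hw i₀).symm.trans_le (hT.movedDist_le_dist hvs hw hvsw)
  omega

/-- moving the branches `M` at `v` to `u` or to `w` strictly increases the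
Wiener index for at least one of the two choices. -/
theorem stmt0 {V : Type*} [Fintype V] (T : SimpleGraph V) (hT : T.IsTree)
    (v u w : V) (t : ℕ) (ht : 1 ≤ t) (vs : Fin t → V) (hinj : Function.Injective vs)
    (hu : T.Adj v u) (hw : T.Adj v w) (huw : u ≠ w)
    (hvs : ∀ i, T.Adj v (vs i)) (hvsu : ∀ i, vs i ≠ u) (hvsw : ∀ i, vs i ≠ w)
    (hnb : ∀ x, T.Adj v x → x = u ∨ x = w ∨ ∃ i, vs i = x) :
    wiener T < max
      (wiener ((T.deleteEdges {e | ∃ i, e = s(v, vs i)}) ⊔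
        SimpleGraph.fromEdgeSet {e | ∃ i, e = s(u, vs i)}))
      (wiener ((T.deleteEdges {e | ∃ i, e = s(v, vs i)}) ⊔
        SimpleGraph.fromEdgeSet {e | ∃ i, e = s(w, vs i)})) :=
  stmt0_general T hT v u w t ht vs hu hw huw hvs hvsu hvsw
end

section
/- In the setting of the previous transformation, if |V(P)| ≥ |V(Q)| then W(T_w) − W(T) = |V(M)|·(|V(P)| − |V(Q)| + 1) > 0, where T_w is obtained by moving all neighbors v_1,...,v_t of v in M to be neighbors of w. -/
open SimpleGraph Finset

namespace SimpleGraph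

variable {V ι : Type*} {G H : SimpleGraph V} {A M : Set V} {u v w x y z : V}

structure IsAttachedAt (G : SimpleGraph V) (A : Set V) (z : V) : Prop where
  notMem : z ∉ A
  eq_of_adj : ∀ ⦃a b⦄, a ∈ A → b ∉ A → G.Adj a b → b = z

namespace IsAttachedAt

theorem mem_support (h : G.IsAttachedAt A z) (p : G.Walk x y) (hx : x ∈ A) (hy : y ∉ A) :
    z ∈ p.support := by
  induction p with
  | nil => exact absurd hx hy
  | @cons a b c hab q ih =>
    by_cases hb : b ∈ A
    · exact List.mem_cons_of_mem _ (ih hb hy)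
    · exact List.mem_cons_of_mem _ (h.eq_of_adj hx hb hab ▸ q.start_mem_support)

theorem dist_eq_add (h : G.IsAttachedAt A z) (hG : G.Connected) (hx : x ∈ A) (hy : y ∉ A) :
    G.dist x y = G.dist x z + G.dist z y := by
  classical
  refine le_antisymm hG.dist_triangle ?_
  obtain ⟨p, hp⟩ := hG.exists_walk_length_eq_dist x y
  have hz := h.mem_support p hx hy
  calc G.dist x z + G.dist z y ≤ (p.takeUntil z hz).length + (p.dropUntil z hz).length :=
        add_le_add (dist_le _) (dist_le _)
    _ = G.dist x y := by rw [← Walk.length_append, Walk.take_spec, hp]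

/-- A path between two vertices outside `A` that entered `A` would have to pass through `z`
both on the way in and on the way out. -/
theorem support_subset_compl (h : G.IsAttachedAt A z) {p : G.Walk x y} (hp : p.IsPath)
    (hx : x ∉ A) (hy : y ∉ A) : ∀ c ∈ p.support, c ∉ A := by
  classical
  intro c hc hcA
  have hin : z ∈ (p.takeUntil c hc).support := by
    simpa using h.mem_support (p.takeUntil c hc).reverse hcA hx
  have hout : z ∈ (p.dropUntil c hc).support.tail := by
    have := h.mem_support (p.dropUntil c hc) hcA hy
    rw [← Walk.cons_tail_support, List.mem_cons] at this
    exact this.resolve_left fun hzc => h.notMem (hzc ▸ hcA)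
  have hnd := hp.support_nodup
  rw [← p.take_spec hc, Walk.support_append, List.nodup_append] at hnd
  exact hnd.2.2 _ hin _ hout rfl

theorem exists_walk_length_eq_dist (h : G.IsAttachedAt A z) (hG : G.Connected)
    (hGH : ∀ ⦃a b⦄, a ∉ A → b ∉ A → G.Adj a b → H.Adj a b) (hx : x ∉ A) (hy : y ∉ A) :
    ∃ q : H.Walk x y, q.length = G.dist x y := by
  obtain ⟨p, hp⟩ := hG.exists_walk_length_eq_dist x y
  have hsupp := h.support_subset_compl (p.isPath_of_length_eq_dist hp) hx hy
  refine ⟨p.transfer H fun e he => ?_, by rw [Walk.length_transfer, hp]⟩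
  induction e with
  | h a b =>
    exact hGH (hsupp a (p.fst_mem_support_of_mem_edges he))
      (hsupp b (p.snd_mem_support_of_mem_edges he)) (p.adj_of_mem_edges he)

theorem dist_eq {zG zH : V} (hG : G.Connected) (hH : H.Connected) (hAG : G.IsAttachedAt A zG)
    (hAH : H.IsAttachedAt A zH) (hGH : ∀ ⦃a b⦄, a ∉ A → b ∉ A → (G.Adj a b ↔ H.Adj a b))
    (hx : x ∉ A) (hy : y ∉ A) : G.dist x y = H.dist x y := by
  obtain ⟨p, hp⟩ := hAG.exists_walk_length_eq_dist hG (fun a b ha hb => (hGH ha hb).1) hx hy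
  obtain ⟨q, hq⟩ := hAH.exists_walk_length_eq_dist hH (fun a b ha hb => (hGH ha hb).2) hx hy
  exact le_antisymm (hq ▸ dist_le q) (hp ▸ dist_le p)

end IsAttachedAt

theorem Hom.edist_le {W : Type*} {G' : SimpleGraph W} (f : G →g G') (x y : V) :
    G'.edist (f x) (f y) ≤ G.edist x y := by
  by_cases hxy : G.Reachable x y
  · obtain ⟨p, hp⟩ := hxy.exists_walk_length_eq_edist
    rw [← hp, ← Walk.length_map f p]
    exact SimpleGraph.edist_le _
  · rw [edist_eq_top_of_not_reachable hxy]
    exact le_top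

theorem Iso.dist_eq {W : Type*} {G' : SimpleGraph W} (e : G ≃g G') (x y : V) :
    G'.dist (e x) (e y) = G.dist x y := by
  refine congrArg ENat.toNat (le_antisymm (Hom.edist_le e.toHom x y) ?_)
  simpa using Hom.edist_le e.symm.toHom (e x) (e y)

structure IsBranchMove (G H : SimpleGraph V) (M : Set V) (v w : V) : Prop where
  isAttachedAt : G.IsAttachedAt M v
  notMem : w ∉ M
  adj_of_notMem : ∀ ⦃a b⦄, a ∉ M → b ∉ M → (H.Adj a b ↔ G.Adj a b)
  adj_of_mem : ∀ ⦃a b⦄, a ∈ M → b ∈ M → (H.Adj a b ↔ G.Adj a b)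
  adj_of_mem_of_notMem : ∀ ⦃a b⦄, a ∈ M → b ∉ M → (H.Adj a b ↔ b = w ∧ G.Adj a v)

namespace IsBranchMove

variable (h : IsBranchMove G H M v w)
include h

theorem isAttachedAt_right : H.IsAttachedAt M w :=
  ⟨h.notMem, fun _ _ ha hb hab => ((h.adj_of_mem_of_notMem ha hb).1 hab).1⟩

theorem swap_apply_of_mem [DecidableEq V] {a : V} (ha : a ∈ M) : Equiv.swap v w a = a :=
  Equiv.swap_apply_of_ne_of_ne (fun hav => h.isAttachedAt.notMem (hav ▸ ha))
    fun haw => h.notMem (haw ▸ ha)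

theorem isAttachedAt_compl_insert : H.IsAttachedAt (insert w M)ᶜ w := by
  refine ⟨by simp, fun a b ha hb hab => ?_⟩
  rw [Set.mem_compl_iff, Set.mem_insert_iff, not_or] at ha
  rw [Set.notMem_compl_iff, Set.mem_insert_iff] at hb
  exact hb.resolve_right fun hbM => ha.1 (h.isAttachedAt_right.eq_of_adj hbM ha.2 hab.symm)

/-- Swapping `v` and `w` in `G` yields a graph that agrees with `H` on `insert w M` and to which
`insert w M` is still attached at `w`; distances inside `insert w M` can thus be read off `G`. -/
theorem isAttachedAt_compl_insert_comap [DecidableEq V] :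
    (G.comap (Equiv.swap v w)).IsAttachedAt (insert w M)ᶜ w := by
  refine ⟨by simp, fun a b ha hb hab => ?_⟩
  rw [Set.mem_compl_iff, Set.mem_insert_iff, not_or] at ha
  rw [Set.notMem_compl_iff, Set.mem_insert_iff] at hb
  refine hb.resolve_right fun hbM => ?_
  have hσa : Equiv.swap v w a ∉ M := fun hσ => ha.2 <| by
    rwa [← Equiv.swap_apply_self v w a, h.swap_apply_of_mem hσ]
  have hab' : G.Adj b (Equiv.swap v w a) := by
    simpa [h.swap_apply_of_mem hbM] using hab.symm
  exact ha.1 (Equiv.swap_apply_eq_iff.1 (h.isAttachedAt.eq_of_adj hbM hσa hab') ▸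
    Equiv.swap_apply_left v w)

theorem adj_iff_comap [DecidableEq V] {a b : V} (ha : a ∉ (insert w M)ᶜ)
    (hb : b ∉ (insert w M)ᶜ) :
    (G.comap (Equiv.swap v w)).Adj a b ↔ H.Adj a b := by
  simp only [Set.notMem_compl_iff, Set.mem_insert_iff] at ha hb
  rcases ha with rfl | ha <;> rcases hb with rfl | hb
  · simp
  · rw [comap_adj, H.adj_comm, h.adj_of_mem_of_notMem hb h.notMem, h.swap_apply_of_mem hb,
      Equiv.swap_apply_right, G.adj_comm]
    simp
  · simp [h.swap_apply_of_mem ha, h.adj_of_mem_of_notMem ha h.notMem]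
  · simp [h.swap_apply_of_mem ha, h.swap_apply_of_mem hb, h.adj_of_mem ha hb]

theorem connected (hG : G.Connected) : H.Connected := by
  classical
  refine (connected_iff_exists_forall_reachable H).2 ⟨w, fun x => ?_⟩
  by_cases hx : x ∈ insert w M
  · obtain ⟨q, -⟩ := h.isAttachedAt_compl_insert_comap.exists_walk_length_eq_dist
      ((Iso.comap _ G).connected_iff.2 hG) (fun a b ha hb => (h.adj_iff_comap ha hb).1)
      (Set.notMem_compl_iff.2 (Set.mem_insert w M)) (Set.notMem_compl_iff.2 hx)
    exact ⟨q⟩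
  · obtain ⟨q, -⟩ := h.isAttachedAt.exists_walk_length_eq_dist hG
      (fun a b ha hb => (h.adj_of_notMem ha hb).2) h.notMem fun hxM => hx (.inr hxM)
    exact ⟨q⟩

theorem dist_of_notMem (hG : G.Connected) (hx : x ∉ M) (hy : y ∉ M) :
    H.dist x y = G.dist x y :=
  (h.isAttachedAt.dist_eq hG (h.connected hG) h.isAttachedAt_right
    (fun _ _ ha hb => (h.adj_of_notMem ha hb).symm) hx hy).symm

theorem dist_of_mem_insert [DecidableEq V] (hG : G.Connected) (hx : x ∈ insert w M)
    (hy : y ∈ insert w M) :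
    H.dist x y = G.dist (Equiv.swap v w x) (Equiv.swap v w y) := by
  rw [← Iso.comap_apply (Equiv.swap v w) G x, ← Iso.comap_apply (Equiv.swap v w) G y,
    Iso.dist_eq]
  exact (h.isAttachedAt_compl_insert_comap.dist_eq ((Iso.comap _ G).connected_iff.2 hG)
    (h.connected hG) h.isAttachedAt_compl_insert (fun _ _ ha hb => h.adj_iff_comap ha hb)
    (Set.notMem_compl_iff.2 hx) (Set.notMem_compl_iff.2 hy)).symm

theorem dist_of_mem_of_notMem (hG : G.Connected) (hx : x ∈ M) (hy : y ∉ M) :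
    H.dist x y = G.dist x v + G.dist w y := by
  classical
  rw [h.isAttachedAt_right.dist_eq_add (h.connected hG) hx hy,
    h.dist_of_mem_insert hG (.inr hx) (.inl rfl), h.dist_of_notMem hG h.notMem hy,
    h.swap_apply_of_mem hx, Equiv.swap_apply_right]

end IsBranchMove

section Wiener

variable [Fintype V]

theorem wiener_sub_wiener_eq (M : Set V) [DecidablePred (· ∈ M)] (g : V → ℚ)
    (hsame : ∀ x y, (x ∈ M ↔ y ∈ M) → H.dist x y = G.dist x y)
    (hcross : ∀ x y, x ∈ M → y ∉ M → (H.dist x y : ℚ) = G.dist x y + g y) :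
    wiener H - wiener G = M.ncard * ∑ y ∈ univ.filter (· ∉ M), g y := by
  set F : V → V → ℚ := fun x y => if x ∈ M ∧ y ∉ M then g y else 0
  have hdiff : ∀ x y, (H.dist x y : ℚ) - G.dist x y = F x y + F y x := by
    intro x y
    by_cases hx : x ∈ M <;> by_cases hy : y ∈ M
    · simp [F, hx, hy, hsame x y (by tauto)]
    · simp [F, hx, hy, hcross x y hx hy]
    · simp [F, hx, hy, G.dist_comm (u := x), H.dist_comm (u := x), hcross y x hy hx]
    · simp [F, hx, hy, hsame x y (by tauto)]
  have hrow : ∀ x, ∑ y, F x y = if x ∈ M then ∑ y ∈ univ.filter (· ∉ M), g y else 0 := by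
    intro x
    split_ifs with hx <;> simp [F, hx, Finset.sum_filter]
  have hM : (M.ncard : ℚ) = (univ.filter (· ∈ M)).card := by
    rw [Set.ncard_eq_toFinset_card' M, Set.filter_mem_univ_eq_toFinset]
  unfold wiener
  rw [div_sub_div_same, ← sum_sub_distrib]
  simp_rw [← sum_sub_distrib, hdiff, sum_add_distrib]
  rw [sum_comm (f := fun x y => F y x)]
  simp_rw [hrow, sum_ite, sum_const_zero, sum_const, nsmul_eq_mul, hM]
  ring

theorem IsBranchMove.wiener_sub_wiener [DecidablePred (· ∈ M)]
    (h : IsBranchMove G H M v w) (hG : G.Connected) :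
    wiener H - wiener G =
      M.ncard * ∑ y ∈ univ.filter (· ∉ M), ((G.dist w y : ℚ) - G.dist v y) := by
  refine wiener_sub_wiener_eq M _ (fun x y hxy => ?_) fun x y hx hy => ?_
  · by_cases hx : x ∈ M
    · classical
      exact (h.dist_of_mem_insert hG (.inr hx) (.inr (hxy.1 hx))).trans <| by
        rw [h.swap_apply_of_mem hx, h.swap_apply_of_mem (hxy.1 hx)]
    · exact h.dist_of_notMem hG hx fun hy => hx (hxy.2 hy)
  · rw [h.dist_of_mem_of_notMem hG hx hy, h.isAttachedAt.dist_eq_add hG hx hy]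
    push_cast
    ring

end Wiener

theorem not_reachable_deleteEdges_of_ne (hx : x ≠ v) :
    ¬ (G.deleteEdges {e | v ∈ e}).Reachable x v := by
  rintro ⟨p⟩
  cases p.reverse with
  | nil => exact hx rfl
  | cons hadj _ => simp at hadj

theorem Walk.reachable_deleteEdges_of_notMem_support (p : G.Walk x y) (hv : v ∉ p.support) :
    (G.deleteEdges {e | v ∈ e}).Reachable x y := by
  induction p with
  | nil => rfl
  | @cons a b c hab q ih =>
    simp only [Walk.support_cons, List.mem_cons, not_or] at hv
    have hb : v ≠ b := fun hvb => hv.2 (hvb ▸ q.start_mem_support)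
    exact Adj.reachable (by simp [hab, hv.1, hb]) |>.trans (ih hv.2)

theorem Connected.exists_adj_reachable_deleteEdges (hG : G.Connected) (hx : x ≠ v) :
    ∃ n, G.Adj v n ∧ (G.deleteEdges {e | v ∈ e}).Reachable n x := by
  obtain ⟨p, hp, -⟩ := (hG v x).exists_path_of_dist
  cases p with
  | nil => exact absurd rfl hx
  | cons hvn q =>
    rw [Walk.cons_isPath_iff] at hp
    exact ⟨_, hvn, q.reachable_deleteEdges_of_notMem_support hp.2⟩

theorem isAttachedAt_of_deleteEdges {A : Set V} (hv : v ∉ A)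
    (hA : ∀ ⦃a b⦄, a ∈ A → (G.deleteEdges {e | v ∈ e}).Adj a b → b ∈ A) :
    G.IsAttachedAt A v := by
  refine ⟨hv, fun a b ha hb hab => by_contra fun hbv => hb (hA ha ?_)⟩
  have hav : v ≠ a := fun hva => hv (hva ▸ ha)
  simp [hab, hav, Ne.symm hbv]

theorem isAttachedAt_setOf_exists_reachable {f : ι → V} (hf : ∀ i, f i ≠ v) :
    G.IsAttachedAt {x | ∃ i, (G.deleteEdges {e | v ∈ e}).Reachable (f i) x} v :=
  isAttachedAt_of_deleteEdges (fun ⟨i, hi⟩ => not_reachable_deleteEdges_of_ne (hf i) hi)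
    fun _ _ ⟨i, hi⟩ hab => ⟨i, hi.trans hab.reachable⟩

theorem isAttachedAt_setOf_reachable (hw : w ≠ v) :
    G.IsAttachedAt {x | (G.deleteEdges {e | v ∈ e}).Reachable w x} v :=
  isAttachedAt_of_deleteEdges (not_reachable_deleteEdges_of_ne hw)
    fun _ _ ha hab => ha.trans hab.reachable

/-- Otherwise `v - b ⋯ a` would bypass the bridge `va`. -/
theorem IsAcyclic.eq_of_reachable_deleteEdges {a b : V} (hG : G.IsAcyclic) (ha : G.Adj v a)
    (hb : G.Adj v b) (hab : (G.deleteEdges {e | v ∈ e}).Reachable a b) : a = b := by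
  by_contra hne
  refine isBridge_iff.1 (isAcyclic_iff_forall_adj_isBridge.1 hG ha) ?_
  have hvb : (G.deleteEdges {s(v, a)}).Adj v b := by simp [hb, Ne.symm hne, ha.ne]
  exact hvb.reachable.trans (hab.symm.mono (deleteEdges_anti (by simp)))

theorem IsAcyclic.isAttachedAt_compl (hG : G.IsAcyclic) (hw : G.Adj v w) :
    G.IsAttachedAt {x | (G.deleteEdges {e | v ∈ e}).Reachable w x}ᶜ w := by
  refine ⟨by simp, fun a b ha hb hab => ?_⟩
  rw [Set.notMem_compl_iff] at hb
  obtain rfl := (isAttachedAt_setOf_reachable hw.ne').eq_of_adj hb ha hab.symm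
  exact (hG.eq_of_reachable_deleteEdges hw hab hb).symm

/-- `T_w` of the paper is `T.reattach v w vs`. -/
def reattach (G : SimpleGraph V) (v w : V) (f : ι → V) : SimpleGraph V :=
  G.deleteEdges {e | ∃ i, e = s(v, f i)} ⊔ fromEdgeSet {e | ∃ i, e = s(w, f i)}

theorem IsAcyclic.isBranchMove_reattach {f : ι → V} (hG : G.IsAcyclic) (hw : G.Adj v w)
    (hf : ∀ i, G.Adj v (f i)) (hfw : ∀ i, f i ≠ w) :
    IsBranchMove G (G.reattach v w f)
      {x | ∃ i, (G.deleteEdges {e | v ∈ e}).Reachable (f i) x} v w := by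
  set M := {x | ∃ i, (G.deleteEdges {e | v ∈ e}).Reachable (f i) x}
  have hM : G.IsAttachedAt M v := isAttachedAt_setOf_exists_reachable fun i => (hf i).ne'
  have hfM : ∀ i, f i ∈ M := fun i => ⟨i, .rfl⟩
  have hwM : w ∉ M := fun ⟨i, hi⟩ => hfw i (hG.eq_of_reachable_deleteEdges (hf i) hw hi)
  have hnb : ∀ a ∈ M, G.Adj v a → ∃ i, f i = a := fun a ⟨i, hi⟩ hva =>
    ⟨i, hG.eq_of_reachable_deleteEdges (hf i) hva hi⟩
  have hadj : ∀ a b, (G.reattach v w f).Adj a b ↔ (G.Adj a b ∧ ¬∃ i, s(a, b) = s(v, f i)) ∨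
      ((∃ i, s(a, b) = s(w, f i)) ∧ a ≠ b) := by
    simp [reattach]
  refine ⟨hM, hwM, fun a b ha hb => ?_, fun a b ha hb => ?_, fun a b ha hb => ?_⟩
  · have hne : ∀ c i, s(a, b) ≠ s(c, f i) := fun c i h => by
      rcases Sym2.eq_iff.1 h with ⟨-, rfl⟩ | ⟨rfl, -⟩
      exacts [hb (hfM i), ha (hfM i)]
    simp [hadj, hne]
  · have hne : ∀ c ∉ M, ∀ i, s(a, b) ≠ s(c, f i) := fun c hc i h => by
      rcases Sym2.eq_iff.1 h with ⟨rfl, -⟩ | ⟨-, rfl⟩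
      exacts [hc ha, hc hb]
    simp [hadj, hne v hM.notMem, hne w hwM]
  · rw [hadj]
    constructor
    · rintro (⟨hab, hne⟩ | ⟨⟨i, hi⟩, -⟩)
      · obtain rfl := hM.eq_of_adj ha hb hab
        obtain ⟨i, rfl⟩ := hnb a ha hab.symm
        exact absurd ⟨i, Sym2.eq_swap⟩ hne
      · rcases Sym2.eq_iff.1 hi with ⟨rfl, -⟩ | ⟨rfl, rfl⟩
        · exact absurd ha hwM
        · exact ⟨rfl, (hf i).symm⟩
    · rintro ⟨rfl, hav⟩
      obtain ⟨i, rfl⟩ := hnb a ha hav.symm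
      exact .inr ⟨⟨i, Sym2.eq_swap⟩, hfw i⟩

theorem IsTree.dist_eq_dist_add_one_of_reachable (hG : G.IsTree) (hw : G.Adj v w)
    (hy : (G.deleteEdges {e | v ∈ e}).Reachable w y) : G.dist v y = G.dist w y + 1 := by
  rw [(hG.isAcyclic.isAttachedAt_compl hw).dist_eq_add hG.connected
    (not_reachable_deleteEdges_of_ne hw.ne') (Set.notMem_compl_iff.2 hy),
    dist_eq_one_iff_adj.2 hw, add_comm]

theorem dist_eq_dist_add_one_of_not_reachable (hG : G.Connected) (hw : G.Adj v w)
    (hy : ¬ (G.deleteEdges {e | v ∈ e}).Reachable w y) : G.dist w y = G.dist v y + 1 := by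
  rw [(isAttachedAt_setOf_reachable hw.ne').dist_eq_add hG .rfl hy,
    dist_eq_one_iff_adj.2 hw.symm, add_comm]

theorem IsAcyclic.disjoint_setOf_reachable (hG : G.IsAcyclic) (hu : G.Adj v u) (hw : G.Adj v w)
    (huw : u ≠ w) :
    Disjoint {x | (G.deleteEdges {e | v ∈ e}).Reachable u x}
      {x | (G.deleteEdges {e | v ∈ e}).Reachable w x} :=
  Set.disjoint_left.2 fun _ hux hwx =>
    huw (hG.eq_of_reachable_deleteEdges hu hw (hux.trans (Set.mem_ofPred.1 hwx).symm))

theorem IsTree.compl_setOf_exists_reachable {f : ι → V} (hG : G.IsTree) (hu : G.Adj v u)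
    (hw : G.Adj v w) (hf : ∀ i, G.Adj v (f i)) (hfu : ∀ i, f i ≠ u) (hfw : ∀ i, f i ≠ w)
    (hnb : ∀ x, G.Adj v x → x = u ∨ x = w ∨ ∃ i, f i = x) :
    {x | ∃ i, (G.deleteEdges {e | v ∈ e}).Reachable (f i) x}ᶜ =
      insert v ({x | (G.deleteEdges {e | v ∈ e}).Reachable u x} ∪
        {x | (G.deleteEdges {e | v ∈ e}).Reachable w x}) := by
  ext x
  simp only [Set.mem_compl_iff, Set.mem_ofPred_eq, Set.mem_insert_iff, Set.mem_union, not_exists]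
  constructor
  · intro hx
    by_cases hxv : x = v
    · exact .inl hxv
    obtain ⟨n, hvn, hn⟩ := hG.connected.exists_adj_reachable_deleteEdges hxv
    rcases hnb n hvn with rfl | rfl | ⟨i, rfl⟩
    exacts [.inr (.inl hn), .inr (.inr hn), absurd hn (hx i)]
  · rintro (rfl | hx | hx) i hi
    · exact not_reachable_deleteEdges_of_ne (hf i).ne' hi
    · exact hfu i (hG.isAcyclic.eq_of_reachable_deleteEdges (hf i) hu (hi.trans hx.symm))
    · exact hfw i (hG.isAcyclic.eq_of_reachable_deleteEdges (hf i) hw (hi.trans hx.symm))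

end SimpleGraph

theorem sum_filter_notMem_eq_ncard_sub_ncard_add_one {V : Type*} [Fintype V] {M P Q : Set V}
    [DecidablePred (· ∈ M)] {v : V} (g : V → ℚ) (hcompl : Mᶜ = insert v (P ∪ Q)) (hvP : v ∉ P)
    (hvQ : v ∉ Q) (hPQ : Disjoint P Q) (hgQ : ∀ y ∈ Q, g y = -1) (hgQc : ∀ y ∉ Q, g y = 1) :
    ∑ y ∈ univ.filter (· ∉ M), g y = P.ncard - Q.ncard + 1 := by
  classical
  have hfilter : univ.filter (· ∉ M) = insert v (P.toFinset ∪ Q.toFinset) := by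
    ext y
    simp [← Set.mem_compl_iff, hcompl]
  rw [hfilter, sum_insert (by simp [hvP, hvQ]), sum_union (Set.disjoint_toFinset.2 hPQ),
    sum_congr rfl fun y hy => hgQc y (hPQ.notMem_of_mem_left (Set.mem_toFinset.1 hy)),
    sum_congr rfl fun y hy => hgQ y (Set.mem_toFinset.1 hy), hgQc v hvQ]
  simp [Set.ncard_eq_toFinset_card']
  ring

theorem stmt1_general {V : Type*} [Fintype V] (T : SimpleGraph V) (hT : T.IsTree)
    (v u w : V) (t : ℕ) (ht : 1 ≤ t) (vs : Fin t → V)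
    (hu : T.Adj v u) (hw : T.Adj v w) (huw : u ≠ w)
    (hvs : ∀ i, T.Adj v (vs i)) (hvsu : ∀ i, vs i ≠ u) (hvsw : ∀ i, vs i ≠ w)
    (hnb : ∀ x, T.Adj v x → x = u ∨ x = w ∨ ∃ i, vs i = x)
    -- the components of `T - v`
    (P Q M : Set V)
    (hP : P = {x | (T.deleteEdges {e | v ∈ e}).Reachable u x})
    (hQ : Q = {x | (T.deleteEdges {e | v ∈ e}).Reachable w x})
    (hM : M = {x | ∃ i, (T.deleteEdges {e | v ∈ e}).Reachable (vs i) x})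
    (hPQ : Q.ncard ≤ P.ncard) :
    wiener ((T.deleteEdges {e | ∃ i, e = s(v, vs i)}) ⊔
        SimpleGraph.fromEdgeSet {e | ∃ i, e = s(w, vs i)}) - wiener T
      = (M.ncard : ℚ) * ((P.ncard : ℚ) - (Q.ncard : ℚ) + 1) ∧
    0 < (M.ncard : ℚ) * ((P.ncard : ℚ) - (Q.ncard : ℚ) + 1) := by
  classical
  have hMpos : 0 < (M.ncard : ℚ) := Nat.cast_pos.2 <|
    (Set.ncard_pos (Set.toFinite M)).2 ⟨vs ⟨0, ht⟩, hM ▸ ⟨⟨0, ht⟩, .rfl⟩⟩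
  subst hP hQ hM
  have hsum := sum_filter_notMem_eq_ncard_sub_ncard_add_one
    (fun y => (T.dist w y : ℚ) - T.dist v y)
    (hT.compl_setOf_exists_reachable hu hw hvs hvsu hvsw hnb)
    (not_reachable_deleteEdges_of_ne hu.ne') (not_reachable_deleteEdges_of_ne hw.ne')
    (hT.isAcyclic.disjoint_setOf_reachable hu hw huw)
    (fun y hy => by simp [hT.dist_eq_dist_add_one_of_reachable hw hy])
    (fun y hy => by simp [dist_eq_dist_add_one_of_not_reachable hT.connected hw hy])
  refine ⟨?_, mul_pos hMpos (by linarith [(Nat.cast_le (α := ℚ)).2 hPQ])⟩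
  rw [← hsum]
  exact (hT.isAcyclic.isBranchMove_reattach hw hvs hvsw).wiener_sub_wiener hT.connected

/-- if `|V(P)| ≥ |V(Q)|` then
`W(T_w) - W(T) = |V(M)| (|V(P)| - |V(Q)| + 1) > 0`. -/
theorem stmt1 {V : Type*} [Fintype V] (T : SimpleGraph V) (hT : T.IsTree)
    (v u w : V) (t : ℕ) (ht : 1 ≤ t) (vs : Fin t → V) (hinj : Function.Injective vs)
    (hu : T.Adj v u) (hw : T.Adj v w) (huw : u ≠ w)
    (hvs : ∀ i, T.Adj v (vs i)) (hvsu : ∀ i, vs i ≠ u) (hvsw : ∀ i, vs i ≠ w)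
    (hnb : ∀ x, T.Adj v x → x = u ∨ x = w ∨ ∃ i, vs i = x)
    -- the components of `T - v`
    (P Q M : Set V)
    (hP : P = {x | (T.deleteEdges {e | v ∈ e}).Reachable u x})
    (hQ : Q = {x | (T.deleteEdges {e | v ∈ e}).Reachable w x})
    (hM : M = {x | ∃ i, (T.deleteEdges {e | v ∈ e}).Reachable (vs i) x})
    (hPQ : Q.ncard ≤ P.ncard) :
    wiener ((T.deleteEdges {e | ∃ i, e = s(v, vs i)}) ⊔
        SimpleGraph.fromEdgeSet {e | ∃ i, e = s(w, vs i)}) - wiener T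
      = (M.ncard : ℚ) * ((P.ncard : ℚ) - (Q.ncard : ℚ) + 1) ∧
    0 < (M.ncard : ℚ) * ((P.ncard : ℚ) - (Q.ncard : ℚ) + 1) :=
  stmt1_general T hT v u w t ht vs hu hw huw hvs hvsu hvsw hnb P Q M hP hQ hM hPQ
end

section
/- Let G be a connected graph of order n with independence number α, where n ≥ 2α. Then G has a spanning tree T which is obtained from a subtree of G of order t ≤ 2α − 1 by attaching the remaining n − t vertices as pendent vertices to vertices of that subtree. -/
/-!
Grow a set `S` with `G.induce S` connected together with an independent set `I ⊆ S`, keeping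
`#S < 2 * #I`. While `S` does not dominate `G`, connectivity gives a vertex `w` at distance
two from `S`, reached through a neighbour `u` of `S`; adding `u, w` to `S` and `w` to `I` keeps the
invariant. As `#I ≤ α`, this stops at a connected dominating set `S` with `#S ≤ 2α - 1`. A
breadth-first-search tree of `G.induce S`, with every other vertex hung from a neighbour in `S`,
is the required spanning tree.
-/

open SimpleGraph Finset

namespace SimpleGraph

variable {V : Type*}

def parentGraph (r : V) (p : V → V) : SimpleGraph V :=
  fromRel fun x y => x ≠ r ∧ p x = y

section ParentGraph

variable {r : V} {p : V → V} {h : V → ℕ}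

lemma parentGraph_adj_parent (hp : ∀ v, v ≠ r → h (p v) < h v) {v : V} (hv : v ≠ r) :
    (parentGraph r p).Adj v (p v) :=
  (fromRel_adj _ _ _).mpr ⟨fun hpv => (hp v hv).ne' (congrArg h hpv), Or.inl ⟨hv, rfl⟩⟩

lemma parentGraph_le {G : SimpleGraph V} (hG : ∀ v, v ≠ r → G.Adj v (p v)) :
    parentGraph r p ≤ G := by
  rintro x y ⟨-, ⟨hx, rfl⟩ | ⟨hy, rfl⟩⟩
  · exact hG x hx
  · exact (hG y hy).symm

lemma parentGraph_eq_parent_of_adj (hp : ∀ v, v ≠ r → h (p v) < h v) {x y : V}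
    (hxy : (parentGraph r p).Adj x y) (hle : h y ≤ h x) : p x = y := by
  obtain ⟨-, ⟨-, hpx⟩ | ⟨hy, rfl⟩⟩ := hxy
  · exact hpx
  · exact absurd (hp y hy) hle.not_gt

lemma parentGraph_induce_reachable_root (hp : ∀ v, v ≠ r → h (p v) < h v) {S : Set V}
    (hr : r ∈ S) (hS : ∀ v ∈ S, v ≠ r → p v ∈ S) (v : V) (hv : v ∈ S) :
    ((parentGraph r p).induce S).Reachable ⟨v, hv⟩ ⟨r, hr⟩ := by
  induction hn : h v using Nat.strong_induction_on generalizing v with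
  | _ n ih =>
    by_cases hvr : v = r
    · subst hvr; rfl
    have hadj : ((parentGraph r p).induce S).Adj ⟨v, hv⟩ ⟨p v, hS v hv hvr⟩ :=
      parentGraph_adj_parent hp hvr
    exact hadj.reachable.trans (ih _ (hn ▸ hp v hvr) _ _ rfl)

lemma parentGraph_induce_connected (hp : ∀ v, v ≠ r → h (p v) < h v) {S : Set V}
    (hr : r ∈ S) (hS : ∀ v ∈ S, v ≠ r → p v ∈ S) :
    ((parentGraph r p).induce S).Connected :=
  (connected_iff_exists_forall_reachable _).mpr ⟨⟨r, hr⟩, fun ⟨v, hv⟩ =>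
    (parentGraph_induce_reachable_root hp hr hS v hv).symm⟩

lemma parentGraph_connected (hp : ∀ v, v ≠ r → h (p v) < h v) :
    (parentGraph r p).Connected :=
  (induceUnivIso _).connected_iff.mp <|
    parentGraph_induce_connected hp (Set.mem_univ r) fun v _ _ => Set.mem_univ (p v)

/-- At a vertex of maximal rank on a cycle, both cycle neighbours would have to be its parent. -/
lemma parentGraph_isAcyclic (hp : ∀ v, v ≠ r → h (p v) < h v) :
    (parentGraph r p).IsAcyclic := by
  classical
  intro v c hc
  obtain ⟨u, hu, humax⟩ := c.support.toFinset.exists_max_image h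
    ⟨v, List.mem_toFinset.mpr c.start_mem_support⟩
  rw [List.mem_toFinset] at hu
  set c' := c.rotate u hu
  have hc' : c'.IsCycle := hc.rotate hu
  have hmax : ∀ z, z ∈ c'.support → h z ≤ h u := fun z hz =>
    humax z (List.mem_toFinset.mpr ((c.mem_support_rotate_iff u hu).mp hz))
  have hsnd : p u = c'.snd := parentGraph_eq_parent_of_adj hp (Walk.adj_snd hc'.not_nil)
    (hmax _ (c'.getVert_mem_support 1))
  have hpen : p u = c'.penultimate :=
    parentGraph_eq_parent_of_adj hp (Walk.adj_penultimate hc'.not_nil).symm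
      (hmax _ (c'.getVert_mem_support _))
  exact hc'.snd_ne_penultimate (hsnd.symm.trans hpen)

lemma parentGraph_isTree (hp : ∀ v, v ≠ r → h (p v) < h v) : (parentGraph r p).IsTree :=
  ⟨parentGraph_connected hp, parentGraph_isAcyclic hp⟩

lemma parentGraph_neighborSet_eq_of_leaf (hp : ∀ v, v ≠ r → h (p v) < h v) {v : V} (hv : v ≠ r)
    (hleaf : ∀ u, u ≠ r → p u ≠ v) : (parentGraph r p).neighborSet v = {p v} := by
  ext u
  simp only [mem_neighborSet, Set.mem_singleton_iff]
  constructor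
  · rintro ⟨-, ⟨-, rfl⟩ | ⟨hu, hpu⟩⟩
    · rfl
    · exact absurd hpu (hleaf u hu)
  · rintro rfl
    exact parentGraph_adj_parent hp hv

end ParentGraph

variable {G : SimpleGraph V}

lemma Reachable.exists_adj_dist_lt {v r : V} (hvr : G.Reachable v r) (hne : v ≠ r) :
    ∃ w, G.Adj v w ∧ G.dist w r < G.dist v r := by
  obtain ⟨q, hq⟩ := hvr.exists_walk_length_eq_dist
  cases q with
  | nil => exact absurd rfl hne
  | cons hadj q =>
    refine ⟨_, hadj, (dist_le q).trans_lt ?_⟩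
    rw [← hq, Walk.length_cons]
    exact Nat.lt_succ_self _

lemma exists_parent_of_connected_induce_of_dominating {S : Set V} {r : V} (hr : r ∈ S)
    (hS : (G.induce S).Connected) (hdom : ∀ v ∉ S, ∃ u ∈ S, G.Adj v u) :
    ∃ (p : V → V) (h : V → ℕ), ∀ v, v ≠ r → G.Adj v (p v) ∧ p v ∈ S ∧ h (p v) < h v := by
  classical
  let d : V → ℕ := fun v => if hv : v ∈ S then (G.induce S).dist ⟨v, hv⟩ ⟨r, hr⟩ else 0
  have hpar : ∀ v, ∃ u, v ≠ r → G.Adj v u ∧ u ∈ S ∧ (v ∈ S → d u < d v) := by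
    intro v
    by_cases hvr : v = r
    · exact ⟨r, fun h => absurd hvr h⟩
    by_cases hv : v ∈ S
    · obtain ⟨⟨w, hw⟩, hadj, hlt⟩ :=
        (hS.preconnected ⟨v, hv⟩ ⟨r, hr⟩).exists_adj_dist_lt (Subtype.coe_ne_coe.mp hvr)
      refine ⟨w, fun _ => ⟨hadj, hw, fun _ => ?_⟩⟩
      simpa only [d, dif_pos hw, dif_pos hv] using hlt
    · obtain ⟨u, hu, hadj⟩ := hdom v hv
      exact ⟨u, fun _ => ⟨hadj, hu, fun h => absurd h hv⟩⟩
  choose p hp using hpar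
  refine ⟨p, fun v => if v ∈ S then d v else d (p v) + 1, fun v hvr => ?_⟩
  obtain ⟨hadj, hpS, hlt⟩ := hp v hvr
  refine ⟨hadj, hpS, ?_⟩
  by_cases hv : v ∈ S
  · simpa only [if_pos hpS, if_pos hv] using hlt hv
  · simp only [if_pos hpS, if_neg hv, Nat.lt_succ_self]

lemma Connected.exists_adj_adj_of_not_dominating (hG : G.Connected) {S : Set V} {r v : V}
    (hr : r ∈ S) (hvS : v ∉ S) (hv : ∀ s ∈ S, ¬ G.Adj v s) :
    ∃ u w, (∃ s ∈ S, G.Adj u s) ∧ G.Adj u w ∧ w ∉ S ∧ ∀ s ∈ S, ¬ G.Adj w s := by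
  let D : Set V := {x | x ∈ S ∨ ∃ s ∈ S, G.Adj x s}
  obtain ⟨d, -, hdD, hwD⟩ :=
    (hG r v).some.exists_boundary_dart D (Or.inl hr) fun h => h.elim hvS fun ⟨s, hs, h⟩ => hv s hs h
  have hwS : d.snd ∉ S := fun h => hwD (Or.inl h)
  have hwN : ∀ s ∈ S, ¬ G.Adj d.snd s := fun s hs h => hwD (Or.inr ⟨s, hs, h⟩)
  refine ⟨d.fst, d.snd, ?_, d.adj, hwS, hwN⟩
  rcases hdD with hu | hu
  · exact absurd d.adj.symm (hwN _ hu)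
  · exact hu

theorem Connected.exists_connected_dominating_of_indep (hG : G.Connected) {a : ℕ}
    (ha : ∀ I : Finset V, G.IsIndepSet I → I.card ≤ a) (S I : Finset V) (hIS : I ⊆ S)
    (hI : G.IsIndepSet I) (hS : (G.induce S).Connected) (hcard : S.card < 2 * I.card) :
    ∃ S : Finset V, (G.induce S).Connected ∧ (∀ v ∉ S, ∃ u ∈ S, G.Adj v u) ∧
      S.card < 2 * a := by
  classical
  by_cases hdom : ∀ v ∉ S, ∃ u ∈ S, G.Adj v u
  · exact ⟨S, hS, hdom, hcard.trans_le (Nat.mul_le_mul_left 2 (ha I hI))⟩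
  push Not at hdom
  obtain ⟨v, hvS, hv⟩ := hdom
  obtain ⟨⟨r, hr⟩⟩ := hS.nonempty
  obtain ⟨u, w, ⟨s, hs, hus⟩, huw, hwS, hwN⟩ :=
    hG.exists_adj_adj_of_not_dominating (S := S) hr hvS hv
  have hwI : w ∉ I := fun h => hwS (hIS h)
  have hIw : G.IsIndepSet (insert w I : Finset V) := by
    rw [coe_insert]
    exact hI.insert fun x hx _ => ⟨hwN x (hIS hx), fun h => hwN x (hIS hx) h.symm⟩
  have hSuw : (G.induce (S ∪ {u, w} : Finset V)).Connected := by
    rw [coe_union, coe_pair]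
    exact connected_induce_union hS.preconnected (induce_pair_connected_of_adj huw).preconnected
      hs (Set.mem_insert u _) hus.symm
  have hle : (insert w I).card ≤ a := ha _ hIw
  have hcardI : (insert w I).card = I.card + 1 := card_insert_of_notMem hwI
  exact hG.exists_connected_dominating_of_indep ha (S ∪ {u, w}) (insert w I)
    (insert_subset (mem_union_right _ (by simp)) (hIS.trans subset_union_left)) hIw hSuw
    (by grind [card_union_le, card_le_two])
termination_by a - I.card
decreasing_by omega

theorem Connected.exists_connected_dominating_card_lt_two_mul (hG : G.Connected) {a : ℕ}
    (ha : ∀ I : Finset V, G.IsIndepSet I → I.card ≤ a) :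
    ∃ S : Finset V, (G.induce S).Connected ∧ (∀ v ∉ S, ∃ u ∈ S, G.Adj v u) ∧
      S.card < 2 * a := by
  obtain ⟨r⟩ := hG.nonempty
  refine hG.exists_connected_dominating_of_indep ha {r} {r} subset_rfl (by simp) ?_ (by simp)
  rw [coe_singleton]
  exact ⟨Preconnected.of_subsingleton⟩

end SimpleGraph

theorem stmt6_general {V : Type*} (G : SimpleGraph V) (a : ℕ)
    (hG : G.Connected) (ha : IsIndepNum G a) :
    ∃ T : SimpleGraph V, T ≤ G ∧ T.IsTree ∧
      ∃ (t : ℕ) (S : Finset V), t ≤ 2 * a - 1 ∧ S.card = t ∧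
        (T.induce (S : Set V)).Connected ∧
        ∀ v ∉ S, (T.neighborSet v).ncard = 1 ∧ ∀ u, T.Adj v u → u ∈ S := by
  have hindep : ∀ I : Finset V, G.IsIndepSet I → I.card ≤ a := fun I hI =>
    ha.2 ⟨I, rfl, fun x hx y hy hxy => hI hx hy (G.ne_of_adj hxy) hxy⟩
  obtain ⟨S, hS, hdom, hcard⟩ := hG.exists_connected_dominating_card_lt_two_mul hindep
  obtain ⟨⟨r, hr⟩⟩ := hS.nonempty
  obtain ⟨p, h, hp⟩ := exists_parent_of_connected_induce_of_dominating hr hS hdom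
  have hrank : ∀ v, v ≠ r → h (p v) < h v := fun v hv => (hp v hv).2.2
  have hne : ∀ v ∉ S, v ≠ r := fun v hv => (ne_of_mem_of_not_mem hr hv).symm
  have hleaf : ∀ v ∉ S, (parentGraph r p).neighborSet v = {p v} := fun v hv =>
    parentGraph_neighborSet_eq_of_leaf hrank (hne v hv) fun u hu hpu => hv (hpu ▸ (hp u hu).2.1)
  refine ⟨parentGraph r p, parentGraph_le fun v hv => (hp v hv).1, parentGraph_isTree hrank,
    S.card, S, by omega, rfl,
    parentGraph_induce_connected hrank hr fun v _ hv => (hp v hv).2.1, fun v hv => ?_⟩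
  refine ⟨by rw [hleaf v hv, Set.ncard_singleton], fun u hu => ?_⟩
  rw [← mem_neighborSet, hleaf v hv, Set.mem_singleton_iff] at hu
  exact hu ▸ (hp v (hne v hv)).2.1

/-- a connected graph of order `n ≥ 2α` has a spanning tree obtained from a
subtree of order `t ≤ 2α - 1` by attaching the remaining vertices as pendent vertices. -/
theorem stmt6 {V : Type*} [Fintype V] (G : SimpleGraph V) (n a : ℕ)
    (hn : Fintype.card V = n) (hG : G.Connected) (ha : IsIndepNum G a) (h : 2 * a ≤ n) :
    ∃ T : SimpleGraph V, T ≤ G ∧ T.IsTree ∧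
      ∃ (t : ℕ) (S : Finset V), t ≤ 2 * a - 1 ∧ S.card = t ∧
        (T.induce (S : Set V)).Connected ∧
        ∀ v ∉ S, (T.neighborSet v).ncard = 1 ∧ ∀ u, T.Adj v u → u ∈ S :=
  stmt6_general G a hG ha
end

section
/- For all integers n ≥ 4 and k ≥ 2 with n ≥ 2k, the inequality (−8k³ + 36k² − 2(9n + 14)k + 3n² + 12n)/(6n(n−1)) < 1/2 holds; equivalently, (1/12)(−8k³ + 36k² + 2(3n² − 12n − 14)k + 3n² + 12n) < C(n,2)·(k + 1/2). -/
open SimpleGraph Finset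

/-- the key numerical inequality. -/
theorem stmt8 (n k : ℕ) (hn : 4 ≤ n) (hk : 2 ≤ k) (hnk : 2 * k ≤ n) :
    ((-8 * (k : ℚ) ^ 3 + 36 * (k : ℚ) ^ 2 - 2 * (9 * (n : ℚ) + 14) * k
        + 3 * (n : ℚ) ^ 2 + 12 * n) / (6 * n * (n - 1)) < 1 / 2) ∧
    ((-8 * (k : ℚ) ^ 3 + 36 * (k : ℚ) ^ 2 + 2 * (3 * (n : ℚ) ^ 2 - 12 * n - 14) * k
        + 3 * (n : ℚ) ^ 2 + 12 * n) / 12 < ((n.choose 2 : ℚ)) * ((k : ℚ) + 1 / 2)) := by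
  have hn' : (4 : ℚ) ≤ n := by exact_mod_cast hn
  have hk' : (2 : ℚ) ≤ k := by exact_mod_cast hk
  have hnk' : 2 * (k : ℚ) ≤ n := by exact_mod_cast hnk
  have key : 0 < 8 * (k:ℚ)^3 - 36 * k^2 + 18 * n * k + 28 * k - 15 * n := by
    nlinarith [sq_nonneg ((k:ℚ) - 2), sq_nonneg ((k:ℚ) - 3), mul_nonneg (sub_nonneg.2 hk') (sub_nonneg.2 hn'), sq_nonneg ((k:ℚ) * (k - 4))]
  have hden : (0:ℚ) < 6 * n * (n - 1) := by nlinarith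
  have hch : ((n.choose 2 : ℚ)) = n * (n - 1) / 2 := by
    rw [Nat.cast_choose_two]
  constructor
  · rw [div_lt_iff₀ hden]
    nlinarith
  · rw [hch]
    nlinarith
end

section
/- Let T be a tree obtained from the path P_{2k−1} (k ≥ 2) by attaching b ≥ 1 pendent vertices to some of its vertices. If the diameter of T is 2k−2 or 2k−1, then μ(T) < k + 1/2. -/
open SimpleGraph Finset

/-!
Write `s = 2k - 2`, so that the spine `p` has vertices `0, …, s`, and let `f` send each leaf to
the index of its neighbour on the spine. Every distance `d(u, w)` is at most `|f u - f w|` plus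
one for each endpoint that is a leaf, and the diameter bound forbids leaves at both ends of the
spine, so the positions of the leaves lie in an interval of length `s - 1`. Two averaging bounds
finish the count: the mean of `|x - i|` over `i ≤ s` is at most `s / 2` for `x ∈ [0, s]`, and
`b` points of an interval of length `ℓ` have pairwise distances summing to at most `ℓ b² / 2`.
The resulting bound on `∑ d(u, w)` falls short of `(2k + 1) n (n - 1)` by `2s(s + 1) + b(s - 1)`.
-/

section
variable {𝕜 : Type*} [Field 𝕜] [LinearOrder 𝕜] [IsStrictOrderedRing 𝕜]

lemma sum_range_abs_sub_le (s : ℕ) {x : 𝕜} (hx₀ : 0 ≤ x) (hxs : x ≤ s) :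
    2 * ∑ i ∈ range (s + 1), |x - i| ≤ s * (s + 1) := by
  rcases Nat.eq_zero_or_pos s with rfl | hs
  · simp [le_antisymm (by simpa using hxs) hx₀]
  have hs' : (0 : 𝕜) < s := by exact_mod_cast hs
  -- `|· - i|` is convex, so on `[0, s]` it lies below its chord
  have hconv : ∀ i ∈ range (s + 1), s * |x - i| ≤ (s - x) * i + x * (s - i) := by
    intro i hi
    have hi : (i : 𝕜) ≤ s := by exact_mod_cast Nat.lt_succ_iff.mp (mem_range.mp hi)
    have hi₀ : (0 : 𝕜) ≤ i := i.cast_nonneg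
    rcases le_total x i with h | h
    · rw [abs_of_nonpos (by linarith)]; nlinarith [mul_nonneg hx₀ (sub_nonneg.2 hi)]
    · rw [abs_of_nonneg (by linarith)]; nlinarith [mul_nonneg hi₀ (sub_nonneg.2 hxs)]
  have hgauss : 2 * ∑ i ∈ range (s + 1), (i : 𝕜) = s * (s + 1) := by
    have := congrArg (Nat.cast (R := 𝕜)) (Finset.sum_range_id_mul_two (s + 1))
    push_cast at this
    linarith
  have hsum : ∑ i ∈ range (s + 1), ((s - x) * i + x * (s - i)) = s * (s + 1) / 2 * s := by
    rw [sum_add_distrib, ← mul_sum, ← mul_sum, sum_sub_distrib, sum_const, card_range,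
      nsmul_eq_mul]
    push_cast
    linear_combination (s - 2 * x) / 2 * hgauss
  have := sum_le_sum hconv
  rw [← mul_sum, hsum] at this
  nlinarith

lemma sum_sum_abs_sub_le_of_mem_Icc {ι : Type*} (t : Finset ι) (x : ι → 𝕜) {a c : 𝕜}
    (hx : ∀ i ∈ t, x i ∈ Set.Icc a c) :
    2 * ∑ i ∈ t, ∑ j ∈ t, |x i - x j| ≤ (c - a) * #t ^ 2 := by
  rcases le_or_gt c a with hca | hac
  · have hle : ∀ i ∈ t, ∑ j ∈ t, |x i - x j| ≤ ∑ j ∈ t, (c - a) := fun i hi =>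
      sum_le_sum fun j hj => abs_sub_le_of_le_of_le (hx i hi).1 (hx i hi).2 (hx j hj).1 (hx j hj).2
    have := sum_le_sum hle
    simp only [sum_const, nsmul_eq_mul] at this
    nlinarith [sq_nonneg (#t : 𝕜)]
  set U := ∑ i ∈ t, (x i - a)
  set W := ∑ i ∈ t, (c - x i)
  have hUW : U + W = (c - a) * #t := by
    rw [← sum_add_distrib]; simp; ring
  -- summed over `i` and `j`, the right-hand side becomes `2 * U * W ≤ (U + W) ^ 2 / 2`
  have hpt : ∀ i ∈ t, ∀ j ∈ t,
      (c - a) * |x i - x j| ≤ (x i - a) * (c - x j) + (x j - a) * (c - x i) := by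
    intro i hi j hj
    obtain ⟨hai, hic⟩ := hx i hi
    obtain ⟨haj, hjc⟩ := hx j hj
    rcases le_total (x i) (x j) with h | h
    · rw [abs_of_nonpos (by linarith)]
      nlinarith [mul_nonneg (sub_nonneg.2 hai) (sub_nonneg.2 hjc)]
    · rw [abs_of_nonneg (by linarith)]
      nlinarith [mul_nonneg (sub_nonneg.2 haj) (sub_nonneg.2 hic)]
  have hsum : ∑ i ∈ t, ∑ j ∈ t, ((x i - a) * (c - x j) + (x j - a) * (c - x i))
      = 2 * (U * W) := by
    simp only [sum_add_distrib]
    rw [sum_comm (f := fun i j => (x j - a) * (c - x i)), sum_mul_sum]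
    ring
  have := sum_le_sum fun i hi => sum_le_sum fun j hj => hpt i hi j hj
  simp only [← mul_sum] at this
  rw [hsum] at this
  refine le_of_mul_le_mul_left ?_ (sub_pos.2 hac)
  calc (c - a) * (2 * ∑ i ∈ t, ∑ j ∈ t, |x i - x j|)
      ≤ 4 * (U * W) := by linarith
    _ ≤ (U + W) ^ 2 := by nlinarith [sq_nonneg (U - W)]
    _ = (c - a) * ((c - a) * #t ^ 2) := by rw [hUW]; ring
end

namespace SimpleGraph
variable {V : Type*} {G : SimpleGraph V}

lemma Walk.abs_sub_le_length {α : Type*} [Ring α] [LinearOrder α] [IsOrderedRing α]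
    {g : V → α} (hg : ∀ u v, G.Adj u v → |g u - g v| ≤ 1) {u v : V} (w : G.Walk u v) :
    |g u - g v| ≤ w.length := by
  induction w with
  | nil => simp
  | @cons a b c h w ih =>
    calc |g a - g c| ≤ |g a - g b| + |g b - g c| := abs_sub_le _ _ _
      _ ≤ 1 + w.length := add_le_add (hg _ _ h) ih
      _ = (w.cons h).length := by rw [Walk.length_cons, Nat.cast_succ, add_comm]

lemma Reachable.abs_sub_le_dist {α : Type*} [Ring α] [LinearOrder α] [IsOrderedRing α]
    {g : V → α} (hg : ∀ u v, G.Adj u v → |g u - g v| ≤ 1) {u v : V} (h : G.Reachable u v) :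
    |g u - g v| ≤ G.dist u v := by
  obtain ⟨w, hw⟩ := h.exists_walk_length_eq_dist
  exact hw ▸ w.abs_sub_le_length hg

lemma Connected.dist_eq_dist_add_one_of_adj_iff (hG : G.Connected) {u v w : V}
    (hv : ∀ x, G.Adj v x ↔ x = u) (hw : w ≠ v) : G.dist v w = G.dist u w + 1 := by
  apply le_antisymm
  · have := hG.dist_triangle (u := v) (v := u) (w := w)
    rw [dist_eq_one_iff_adj.2 ((hv u).2 rfl)] at this
    omega
  · obtain ⟨W, hW⟩ := hG.exists_walk_length_eq_dist v w
    cases W with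
    | nil => exact absurd rfl hw
    | cons h W =>
      obtain rfl := (hv _).1 h
      rw [← hW, Walk.length_cons]
      exact Nat.add_le_add_right (dist_le W) 1

end SimpleGraph

section Caterpillar

variable {V : Type*} {T : SimpleGraph V} {m : ℕ} {p : Fin m → V} {f : V → Fin m}

structure IsCaterpillar (T : SimpleGraph V) (p : Fin m → V) (f : V → Fin m) : Prop where
  adj_spine : ∀ i j, T.Adj (p i) (p j) ↔ (i : ℕ) + 1 = j ∨ (j : ℕ) + 1 = i
  proj_spine : ∀ i, f (p i) = i
  adj_leaf : ∀ v ∉ Set.range p, ∀ u, T.Adj v u ↔ u = p (f v)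

lemma exists_isCaterpillar (hinj : Function.Injective p)
    (hpath : ∀ i j, T.Adj (p i) (p j) ↔ (i : ℕ) + 1 = j ∨ (j : ℕ) + 1 = i)
    (hout : ∀ v, (∀ i, v ≠ p i) →
      (T.neighborSet v).ncard = 1 ∧ ∀ u, T.Adj v u → ∃ i, u = p i) :
    ∃ f, IsCaterpillar T p f := by
  have key : ∀ v, ∃ i, v = p i ∨ (v ∉ Set.range p ∧ ∀ u, T.Adj v u ↔ u = p i) := by
    intro v
    by_cases hv : v ∈ Set.range p
    · obtain ⟨i, rfl⟩ := hv
      exact ⟨i, Or.inl rfl⟩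
    · obtain ⟨hdeg, hnbr⟩ := hout v fun i h => hv ⟨i, h.symm⟩
      obtain ⟨u, hu⟩ := Set.ncard_eq_one.1 hdeg
      have hnbr_iff : ∀ x, T.Adj v x ↔ x = u := fun x => by
        rw [← mem_neighborSet, hu, Set.mem_singleton_iff]
      obtain ⟨i, rfl⟩ := hnbr u ((hnbr_iff u).2 rfl)
      exact ⟨i, Or.inr ⟨hv, hnbr_iff⟩⟩
  choose f hf using key
  refine ⟨f, hpath, fun i => ?_, fun v hv => ?_⟩
  · rcases hf (p i) with h | h
    · exact (hinj h).symm
    · exact absurd ⟨i, rfl⟩ h.1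
  · rcases hf v with h | h
    · exact absurd ⟨f v, h.symm⟩ hv
    · exact h.2

namespace IsCaterpillar

section

variable (hC : IsCaterpillar T p f)
include hC

lemma injective : Function.Injective p :=
  Function.LeftInverse.injective hC.proj_spine

lemma abs_proj_sub_le_one_of_adj {u w : V} (h : T.Adj u w) : |(f u : ℚ) - f w| ≤ 1 := by
  by_cases hu : u ∈ Set.range p
  · by_cases hw : w ∈ Set.range p
    · obtain ⟨i, rfl⟩ := hu
      obtain ⟨j, rfl⟩ := hw
      have hij : ((i : ℕ) : ℚ) + 1 = j ∨ ((j : ℕ) : ℚ) + 1 = i := by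
        exact_mod_cast (hC.adj_spine i j).1 h
      rw [hC.proj_spine, hC.proj_spine, abs_le]
      constructor <;> rcases hij with hij | hij <;> linarith
    · rw [(hC.adj_leaf w hw u).1 h.symm, hC.proj_spine]
      simp
  · rw [(hC.adj_leaf u hu w).1 h, hC.proj_spine]
    simp

lemma dist_spine_le {d : ℕ} {i j : Fin m} (hconn : T.Connected) (h : (i : ℕ) + d = j) :
    T.dist (p i) (p j) ≤ d := by
  induction d generalizing i with
  | zero =>
    obtain rfl : i = j := Fin.ext (by omega)
    simp
  | succ d ih =>
    let i' : Fin m := ⟨i + 1, by omega⟩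
    have hadj : T.Adj (p i) (p i') := (hC.adj_spine i i').2 (Or.inl rfl)
    have := hconn.dist_triangle (u := p i) (v := p i') (w := p j)
    rw [dist_eq_one_iff_adj.2 hadj] at this
    have := ih (i := i') (by simp only [i']; omega)
    omega

lemma dist_spine (hconn : T.Connected) (i j : Fin m) :
    (T.dist (p i) (p j) : ℚ) = |(i : ℚ) - j| := by
  apply le_antisymm
  · rcases le_total (i : ℕ) j with h | h
    · obtain ⟨d, hd⟩ := Nat.exists_eq_add_of_le h
      have hd' : ((j : ℕ) : ℚ) = i + d := by exact_mod_cast hd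
      rw [hd', show ((i : ℕ) : ℚ) - (i + d) = -d by ring, abs_neg, Nat.abs_cast]
      exact_mod_cast hC.dist_spine_le hconn hd.symm
    · obtain ⟨d, hd⟩ := Nat.exists_eq_add_of_le h
      have hd' : ((i : ℕ) : ℚ) = j + d := by exact_mod_cast hd
      rw [hd', add_sub_cancel_left, Nat.abs_cast, dist_comm]
      exact_mod_cast hC.dist_spine_le hconn hd.symm
  · simpa only [hC.proj_spine] using
      (hconn.preconnected (p i) (p j)).abs_sub_le_dist (g := fun v => ((f v : ℕ) : ℚ))
        fun _ _ => hC.abs_proj_sub_le_one_of_adj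

lemma dist_le (hconn : T.Connected) (u w : V) :
    (T.dist u w : ℚ) ≤ T.dist u (p (f u)) + |(f u : ℚ) - f w| + T.dist w (p (f w)) := by
  have h₁ := hconn.dist_triangle (u := u) (v := p (f u)) (w := w)
  have h₂ := hconn.dist_triangle (u := p (f u)) (v := p (f w)) (w := w)
  rw [dist_comm (u := p (f w))] at h₂
  rw [← hC.dist_spine hconn]
  exact_mod_cast h₁.trans (by omega)

lemma dist_of_notMem_range (hconn : T.Connected) {v w : V} (hv : v ∉ Set.range p)
    (hw : w ∉ Set.range p) (hvw : v ≠ w) : (T.dist v w : ℚ) = |(f v : ℚ) - f w| + 2 := by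
  rw [hconn.dist_eq_dist_add_one_of_adj_iff (hC.adj_leaf v hv) hvw.symm, dist_comm,
    hconn.dist_eq_dist_add_one_of_adj_iff (hC.adj_leaf w hw) fun h => hw ⟨f v, h⟩, dist_comm]
  push_cast
  rw [hC.dist_spine hconn]
  ring

end

section

variable {s : ℕ} {p : Fin (s + 1) → V} {f : V → Fin (s + 1)} (hC : IsCaterpillar T p f)
include hC

lemma exists_proj_leaves_mem_Icc [Finite V] (hconn : T.Connected) (hs : 1 ≤ s)
    (hdiam : T.diam ≤ s + 1) :
    ∃ a : ℚ, ∀ v ∉ Set.range p, (f v : ℚ) ∈ Set.Icc a (a + (s - 1)) := by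
  have : Nonempty V := ⟨p 0⟩
  have hdist_le : ∀ v w, (T.dist v w : ℚ) ≤ s + 1 := fun v w => by
    exact_mod_cast (dist_le_diam (connected_iff_ediam_ne_top.1 hconn)).trans hdiam
  by_cases h₀ : ∃ v ∉ Set.range p, (f v : ℕ) = 0
  · obtain ⟨v, hv, hv₀⟩ := h₀
    refine ⟨0, fun w hw => ⟨by positivity, ?_⟩⟩
    -- leaves at both ends of the spine would be `s + 2` apart
    by_contra! hws
    have hws : (f w : ℕ) = s := by
      have : s < (f w : ℕ) + 1 := by exact_mod_cast (by linarith : (s : ℚ) < (f w : ℕ) + 1)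
      have := (f w).isLt
      omega
    have hvw : v ≠ w := fun h => by subst h; omega
    have := hdist_le v w
    rw [hC.dist_of_notMem_range hconn hv hw hvw, hv₀, hws] at this
    norm_num at this
  · push Not at h₀
    refine ⟨1, fun w hw => ⟨by exact_mod_cast Nat.one_le_iff_ne_zero.2 (h₀ w hw), ?_⟩⟩
    have : (f w : ℚ) ≤ s := by exact_mod_cast (f w).is_le
    linarith

variable [Fintype V] {b : ℕ}

lemma sum_eq_sum_spine_add_sum_compl [DecidableEq V] (F : V → ℚ) :
    ∑ v, F v = ∑ i, F (p i) + ∑ v ∈ (univ.image p)ᶜ, F v := by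
  rw [← sum_add_sum_compl (univ.image p), sum_image fun i _ j _ h => hC.injective h]

lemma card_compl_image [DecidableEq V] (hcard : Fintype.card V = s + 1 + b) :
    #(univ.image p)ᶜ = b := by
  rw [card_compl, card_image_of_injective _ hC.injective, card_univ, Fintype.card_fin, hcard]
  omega

lemma sum_dist_proj (hcard : Fintype.card V = s + 1 + b) :
    ∑ u, (T.dist u (p (f u)) : ℚ) = b := by
  classical
  have hleaves : ∀ v ∈ (univ.image p)ᶜ, (T.dist v (p (f v)) : ℚ) = 1 := fun v hv => by
    have hv : v ∉ Set.range p := by simpa using hv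
    exact_mod_cast dist_eq_one_iff_adj.2 ((hC.adj_leaf v hv _).2 rfl)
  rw [hC.sum_eq_sum_spine_add_sum_compl, sum_congr rfl hleaves]
  simp [hC.proj_spine, hC.card_compl_image hcard]

lemma sum_sum_abs_proj_sub_le (hcard : Fintype.card V = s + 1 + b)
    (hwin : ∃ a : ℚ, ∀ v ∉ Set.range p, (f v : ℚ) ∈ Set.Icc a (a + (s - 1))) :
    2 * ∑ u, ∑ w, |(f u : ℚ) - f w|
      ≤ (s + 1 + 2 * b) * (s * (s + 1)) + (s - 1) * b ^ 2 := by
  classical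
  set Q := (univ.image p)ᶜ
  have hQ : #Q = b := hC.card_compl_image hcard
  have hspine : ∀ v, 2 * ∑ i : Fin (s + 1), |(f v : ℚ) - i| ≤ s * (s + 1) := fun v => by
    rw [Fin.sum_univ_eq_sum_range (fun i => |(f v : ℚ) - i|)]
    exact sum_range_abs_sub_le s (Nat.cast_nonneg _) (by exact_mod_cast (f v).is_le)
  have hsplit : ∀ F : V → ℚ, ∑ w, F w = ∑ i, F (p i) + ∑ w ∈ Q, F w :=
    hC.sum_eq_sum_spine_add_sum_compl
  have hrow : ∀ u, ∑ w, |(f u : ℚ) - f w|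
      = ∑ i : Fin (s + 1), |(f u : ℚ) - i| + ∑ w ∈ Q, |(f u : ℚ) - f w| := fun u => by
    simp only [hsplit fun w => |(f u : ℚ) - f w|, hC.proj_spine]
  have hcol : ∀ w, ∑ u, |(f u : ℚ) - f w|
      = ∑ i : Fin (s + 1), |(f w : ℚ) - i| + ∑ u ∈ Q, |(f u : ℚ) - f w| := fun w => by
    simp only [hsplit fun u => |(f u : ℚ) - f w|, hC.proj_spine]
    exact congrArg (· + _) (sum_congr rfl fun i _ => abs_sub_comm _ _)
  have hall :
      2 * ∑ u, ∑ i : Fin (s + 1), |(f u : ℚ) - i| ≤ (s + 1 + b) * (s * (s + 1)) := by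
    rw [mul_sum]
    refine (sum_le_sum fun v _ => hspine v).trans_eq ?_
    simp [hcard]
  have hleaves : 2 * ∑ w ∈ Q, ∑ i : Fin (s + 1), |(f w : ℚ) - i| ≤ b * (s * (s + 1)) := by
    rw [mul_sum]
    refine (sum_le_sum fun v _ => hspine v).trans_eq ?_
    simp [hQ]
  have hwindow : 2 * ∑ u ∈ Q, ∑ w ∈ Q, |(f u : ℚ) - f w| ≤ (s - 1) * b ^ 2 := by
    obtain ⟨a, ha⟩ := hwin
    have := sum_sum_abs_sub_le_of_mem_Icc Q (fun v => (f v : ℚ))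
      fun v hv => ha v (by simpa [Q] using hv)
    rwa [add_sub_cancel_left, hQ] at this
  rw [sum_congr rfl fun u _ => hrow u, sum_add_distrib, sum_comm (s := univ) (t := Q),
    sum_congr rfl fun w _ => hcol w, sum_add_distrib, sum_comm (s := Q) (t := Q)]
  linarith

lemma sum_sum_dist_le (hconn : T.Connected) (hcard : Fintype.card V = s + 1 + b)
    (hwin : ∃ a : ℚ, ∀ v ∉ Set.range p, (f v : ℚ) ∈ Set.Icc a (a + (s - 1))) :
    2 * ∑ u, ∑ w, (T.dist u w : ℚ)
      ≤ (s + 1 + 2 * b) * (s * (s + 1)) + (s - 1) * b ^ 2 + 4 * (s + 1 + b) * b := by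
  have hle := sum_le_sum fun u (_ : u ∈ univ) => sum_le_sum fun w (_ : w ∈ univ) =>
    hC.dist_le hconn u w
  simp only [sum_add_distrib, sum_const, card_univ, nsmul_eq_mul, ← mul_sum,
    hC.sum_dist_proj hcard, hcard] at hle
  have := hC.sum_sum_abs_proj_sub_le hcard hwin
  push_cast at hle
  linarith

end

end IsCaterpillar

end Caterpillar

theorem stmt10_general {V : Type*} [Fintype V] (T : SimpleGraph V) (hT : T.IsTree)
    (k b : ℕ) (hk : 2 ≤ k) (hcard : Fintype.card V = 2 * k - 1 + b)
    (p : Fin (2 * k - 1) → V) (hinj : Function.Injective p)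
    (hpath : ∀ i j, T.Adj (p i) (p j) ↔ ((i : ℕ) + 1 = (j : ℕ) ∨ (j : ℕ) + 1 = (i : ℕ)))
    (hout : ∀ v, (∀ i, v ≠ p i) →
      (T.neighborSet v).ncard = 1 ∧ ∀ u, T.Adj v u → ∃ i, u = p i)
    (hdiam : T.diam = 2 * k - 2 ∨ T.diam = 2 * k - 1) :
    avgDist T < (k : ℚ) + 1 / 2 := by
  obtain ⟨f, hC⟩ := exists_isCaterpillar hinj hpath hout
  have hconn := hT.connected
  generalize hm : 2 * k - 1 = m at *
  obtain ⟨s, rfl⟩ : ∃ s, m = s + 1 := ⟨m - 1, by omega⟩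
  have hs : (1 : ℚ) ≤ s := by exact_mod_cast (by omega : 1 ≤ s)
  have hks : (2 * k : ℚ) = s + 2 := by exact_mod_cast (by omega : 2 * k = s + 2)
  have hwin := hC.exists_proj_leaves_mem_Icc hconn (by omega) (by omega)
  have hsum := hC.sum_sum_dist_le hconn hcard hwin
  have hb : (0 : ℚ) ≤ b := b.cast_nonneg
  have hslack : ((s : ℚ) + 1 + 2 * b) * (s * (s + 1)) + (s - 1) * b ^ 2 + 4 * (s + 1 + b) * b
      < (s + 3) * ((s + 1 + b) * (s + b)) := by nlinarith
  unfold avgDist wiener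
  rw [hcard, Nat.cast_choose_two, div_lt_iff₀ (by push_cast; nlinarith),
    show (k : ℚ) = (s + 2) / 2 by linarith]
  push_cast
  linarith

/-- a tree obtained from `P_{2k-1}` by attaching `b ≥ 1` pendent vertices,
whose diameter is `2k-2` or `2k-1`, has average distance `< k + 1/2`. -/
theorem stmt10 {V : Type*} [Fintype V] (T : SimpleGraph V) (hT : T.IsTree)
    (k b : ℕ) (hk : 2 ≤ k) (hb : 1 ≤ b) (hcard : Fintype.card V = 2 * k - 1 + b)
    (p : Fin (2 * k - 1) → V) (hinj : Function.Injective p)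
    (hpath : ∀ i j, T.Adj (p i) (p j) ↔ ((i : ℕ) + 1 = (j : ℕ) ∨ (j : ℕ) + 1 = (i : ℕ)))
    (hout : ∀ v, (∀ i, v ≠ p i) →
      (T.neighborSet v).ncard = 1 ∧ ∀ u, T.Adj v u → ∃ i, u = p i)
    (hdiam : T.diam = 2 * k - 2 ∨ T.diam = 2 * k - 1) :
    avgDist T < (k : ℚ) + 1 / 2 :=
  stmt10_general T hT k b hk hcard p hinj hpath hout hdiam
end

section
/- Let T be a tree of order n obtained from a path on 2k−1 vertices by attaching n − 2k + 1 pendent vertices to path vertices, such that T has exactly n − 2k + 2 pendent vertices. Then μ(T) < k + 1/2. -/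
open SimpleGraph Finset

lemma sum_sub_eq (M : ℕ) : ∑ i ∈ Finset.range M, (M - i) = ∑ i ∈ Finset.range (M+1), i := by
  rw [← Finset.sum_range_reflect, Finset.sum_range_succ']
  simp only [add_zero]
  refine Finset.sum_congr rfl fun j hj => ?_
  have := Finset.mem_range.mp hj; omega

lemma sum_sub_eq' (M : ℕ) : (∑ i ∈ Finset.range M, (M - i)) * 2 = (M + 1) * M := by
  rw [sum_sub_eq, Finset.sum_range_id_mul_two]; simp

lemma sum_natDist_cube (N : ℕ) :
    3 * (∑ i ∈ Finset.range N, ∑ j ∈ Finset.range N, Nat.dist i j) + N = N ^ 3 := by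
  induction N with
  | zero => simp
  | succ N ih =>
    have hrow : (∑ i ∈ Finset.range N, Nat.dist i N) * 2 = (N + 1) * N := by
      have h1 : ∀ i ∈ Finset.range N, Nat.dist i N = N - i := by
        intro i hi; exact Nat.dist_eq_sub_of_le (le_of_lt (Finset.mem_range.mp hi))
      rw [Finset.sum_congr rfl h1, sum_sub_eq']
    have e1 : (∑ i ∈ Finset.range (N+1), ∑ j ∈ Finset.range (N+1), Nat.dist i j)
        = (∑ i ∈ Finset.range N, ∑ j ∈ Finset.range N, Nat.dist i j)
          + (∑ i ∈ Finset.range N, Nat.dist i N) * 2 := by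
      rw [Finset.sum_range_succ]
      have : ∀ i ∈ Finset.range N, ∑ j ∈ Finset.range (N+1), Nat.dist i j
          = (∑ j ∈ Finset.range N, Nat.dist i j) + Nat.dist i N := by
        intro i _; rw [Finset.sum_range_succ]
      rw [Finset.sum_congr rfl this, Finset.sum_add_distrib]
      have h2 : ∑ j ∈ Finset.range (N+1), Nat.dist N j
          = ∑ j ∈ Finset.range N, Nat.dist j N := by
        rw [Finset.sum_range_succ, Nat.dist_self, add_zero]
        exact Finset.sum_congr rfl fun j _ => Nat.dist_comm N j
      rw [h2]; omega
    rw [e1, hrow]; ring_nf; ring_nf at ih; nlinarith [ih]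

lemma sum_natDist_le (N a : ℕ) (ha : a < N) :
    2 * (∑ i ∈ Finset.range N, Nat.dist a i) + 2 * N ≤ N * (N + 1) := by
  induction N with
  | zero => omega
  | succ N ih =>
    rw [Finset.sum_range_succ]
    rcases Nat.lt_or_ge a N with h | h
    · have h1 := ih h
      have hdN : Nat.dist a N ≤ N := by
        rw [Nat.dist_eq_sub_of_le (le_of_lt h)]; omega
      nlinarith [h1, hdN]
    · have haN : a = N := by omega
      subst haN
      have h1 : ∀ i ∈ Finset.range a, Nat.dist a i = a - i := by
        intro i hi; exact Nat.dist_eq_sub_of_le_right (le_of_lt (Finset.mem_range.mp hi))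
      rw [Finset.sum_congr rfl h1, Nat.dist_self]
      have h2 := sum_sub_eq' a
      nlinarith [h2]

lemma natDist_cuts (M a b : ℕ) (ha : a < M + 1) (hb : b < M + 1) :
    Nat.dist a b = ∑ t ∈ Finset.range M, (if ((a ≤ t) ↔ (b ≤ t)) then 0 else 1) := by
  have key : ∀ a b : ℕ, a ≤ b → b < M + 1 →
      (b - a) = ∑ t ∈ Finset.range M, (if ((a ≤ t) ↔ (b ≤ t)) then 0 else 1) := by
    intro a b hab hbM
    have h1 : ∀ t ∈ Finset.range M,
        (if ((a ≤ t) ↔ (b ≤ t)) then (0:ℕ) else 1) = (if (a ≤ t ∧ t < b) then 1 else 0) := by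
      intro t _
      by_cases h : a ≤ t ∧ t < b
      · rw [if_pos h, if_neg]; intro hiff; omega
      · rw [if_neg h, if_pos]; constructor <;> intro <;> omega
    rw [Finset.sum_congr rfl h1, ← Finset.card_filter]
    have h2 : (Finset.range M).filter (fun t => a ≤ t ∧ t < b) = Finset.Ico a b := by
      ext t; simp only [Finset.mem_filter, Finset.mem_range, Finset.mem_Ico]; omega
    rw [h2, Nat.card_Ico]
  rcases Nat.le_total a b with h | h
  · rw [Nat.dist_eq_sub_of_le h]; exact key a b h hb
  · rw [Nat.dist_eq_sub_of_le_right h, key b a h ha]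
    exact Finset.sum_congr rfl fun t _ => by
      by_cases h1 : a ≤ t <;> by_cases h2 : b ≤ t <;> simp [h1, h2]

lemma sum_cut_eq {V : Type*} (A : Finset V) (P : V → Prop) [DecidablePred P] :
    ∑ x ∈ A, ∑ y ∈ A, (if (P x ↔ P y) then (0:ℕ) else 1)
      = 2 * ((A.filter P).card * (A.filter (fun x => ¬ P x)).card) := by
  have inner : ∀ x ∈ A, ∑ y ∈ A, (if (P x ↔ P y) then (0:ℕ) else 1)
      = if P x then (A.filter (fun y => ¬ P y)).card else (A.filter P).card := by
    intro x _
    by_cases hx : P x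
    · rw [if_pos hx, Finset.card_filter]
      exact Finset.sum_congr rfl fun y _ => by
        by_cases hy : P y <;> simp [hx, hy]
    · rw [if_neg hx, Finset.card_filter]
      exact Finset.sum_congr rfl fun y _ => by
        by_cases hy : P y <;> simp [hx, hy]
  rw [Finset.sum_congr rfl inner, ← Finset.sum_filter_add_sum_filter_not A P]
  rw [Finset.sum_congr rfl (fun x hx => if_pos (Finset.mem_filter.mp hx).2),
      Finset.sum_congr rfl (fun x hx => if_neg (Finset.mem_filter.mp hx).2)]
  rw [Finset.sum_const, Finset.sum_const, smul_eq_mul, smul_eq_mul]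
  ring

lemma sum_dist_pairs_bound {V : Type*} (A : Finset V) (g : V → ℕ) (L : ℕ)
    (hg : ∀ x ∈ A, g x < L + 2)
    (hcon : (∀ x ∈ A, g x ≠ 0) ∨ (∀ x ∈ A, g x ≠ L + 1)) :
    2 * (∑ x ∈ A, ∑ y ∈ A, Nat.dist (g x) (g y)) ≤ L * A.card ^ 2 := by
  classical
  set m := A.card with hm
  have step1 : (∑ x ∈ A, ∑ y ∈ A, Nat.dist (g x) (g y))
      = ∑ t ∈ Finset.range (L+1), ∑ x ∈ A, ∑ y ∈ A,
          (if ((g x ≤ t) ↔ (g y ≤ t)) then (0:ℕ) else 1) := by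
    have h1 : ∀ x ∈ A, ∀ y ∈ A, Nat.dist (g x) (g y)
        = ∑ t ∈ Finset.range (L+1), (if ((g x ≤ t) ↔ (g y ≤ t)) then (0:ℕ) else 1) := by
      intro x hx y hy
      exact natDist_cuts (L+1) (g x) (g y) (by have := hg x hx; omega) (by have := hg y hy; omega)
    rw [Finset.sum_congr rfl fun x hx => Finset.sum_congr rfl fun y hy => h1 x hx y hy]
    calc (∑ x ∈ A, ∑ y ∈ A, ∑ t ∈ Finset.range (L+1),
            (if ((g x ≤ t) ↔ (g y ≤ t)) then (0:ℕ) else 1))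
        = ∑ x ∈ A, ∑ t ∈ Finset.range (L+1), ∑ y ∈ A,
            (if ((g x ≤ t) ↔ (g y ≤ t)) then (0:ℕ) else 1) :=
          Finset.sum_congr rfl fun x _ => Finset.sum_comm
      _ = ∑ t ∈ Finset.range (L+1), ∑ x ∈ A, ∑ y ∈ A,
            (if ((g x ≤ t) ↔ (g y ≤ t)) then (0:ℕ) else 1) := Finset.sum_comm
  set c1 : ℕ → ℕ := fun t => (A.filter (fun x => g x ≤ t)).card with hc1
  set c2 : ℕ → ℕ := fun t => (A.filter (fun x => ¬ (g x ≤ t))).card with hc2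
  have step2 : ∀ t, ∑ x ∈ A, ∑ y ∈ A, (if ((g x ≤ t) ↔ (g y ≤ t)) then (0:ℕ) else 1)
      = 2 * (c1 t * c2 t) := fun t => sum_cut_eq A (fun x => g x ≤ t)
  have hsum : ∀ t, c1 t + c2 t = m := fun t =>
    Finset.card_filter_add_card_filter_not (fun x => g x ≤ t)
  obtain ⟨t0, ht0mem, ht0⟩ : ∃ t0 ∈ Finset.range (L+1), 2 * (2 * (c1 t0 * c2 t0)) = 0 := by
    rcases hcon with h | h
    · refine ⟨0, Finset.mem_range.mpr (by omega), ?_⟩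
      have h0 : c1 0 = 0 := by
        rw [hc1]; simp only [Finset.card_eq_zero]
        rw [Finset.filter_eq_empty_iff]
        intro x hx; have := h x hx; omega
      rw [h0]; ring
    · refine ⟨L, Finset.mem_range.mpr (by omega), ?_⟩
      have h0 : c2 L = 0 := by
        rw [hc2]; simp only [Finset.card_eq_zero]
        rw [Finset.filter_eq_empty_iff]
        intro x hx; have h1 := h x hx; have h2 := hg x hx; omega
      rw [h0]; ring
  rw [step1, Finset.sum_congr rfl fun t _ => step2 t, Finset.mul_sum]
  rw [← Finset.add_sum_erase _ _ ht0mem, ht0, zero_add]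
  calc ∑ t ∈ (Finset.range (L+1)).erase t0, 2 * (2 * (c1 t * c2 t))
      ≤ ∑ _t ∈ (Finset.range (L+1)).erase t0, m ^ 2 := by
        refine Finset.sum_le_sum fun t _ => ?_
        have hs : (c1 t + c2 t) ^ 2 = m ^ 2 := by rw [hsum t]
        nlinarith [hs, two_mul_le_add_sq (c1 t) (c2 t)]
    _ = L * m ^ 2 := by
        rw [Finset.sum_const, smul_eq_mul, Finset.card_erase_of_mem ht0mem,
          Finset.card_range]
        simp

set_option maxHeartbeats 3000000 in
/-- a tree obtained from a path on `2k-1` vertices by attaching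
`n - 2k + 1` pendent vertices, having exactly `n - 2k + 2` pendent vertices,
has average distance `< k + 1/2`. -/
theorem stmt11 {V : Type*} [Fintype V] (T : SimpleGraph V) (hT : T.IsTree)
    (n k : ℕ) (hk : 2 ≤ k) (hn : 2 * k ≤ n) (hcard : Fintype.card V = n)
    (p : Fin (2 * k - 1) → V) (hinj : Function.Injective p)
    (hpath : ∀ i j, T.Adj (p i) (p j) ↔ ((i : ℕ) + 1 = (j : ℕ) ∨ (j : ℕ) + 1 = (i : ℕ)))
    (hout : ∀ v, (∀ i, v ≠ p i) →
      (T.neighborSet v).ncard = 1 ∧ ∀ u, T.Adj v u → ∃ i, u = p i)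
    (hpend : {x : V | (T.neighborSet x).ncard = 1}.ncard = n - 2 * k + 2) :
    avgDist T < (k : ℚ) + 1 / 2 := by
  classical
  have hconn : T.Connected := hT.isConnected
  have hN3 : 3 ≤ 2 * k - 1 := by omega
  -- choice of position function
  have hq0 : ∀ v : V, ∃ i : Fin (2*k-1), (v = p i) ∨ ((∀ j, v ≠ p j) ∧ T.neighborSet v = {p i}) := by
    intro v
    by_cases h : ∃ i, v = p i
    · obtain ⟨i, hi⟩ := h; exact ⟨i, Or.inl hi⟩
    · push_neg at h
      obtain ⟨h1, h2⟩ := hout v h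
      obtain ⟨u, hu⟩ := Set.ncard_eq_one.mp h1
      have hadj : T.Adj v u := by
        rw [← SimpleGraph.mem_neighborSet, hu]; exact Set.mem_singleton u
      obtain ⟨i, hi⟩ := h2 u hadj
      exact ⟨i, Or.inr ⟨h, by rw [hu, hi]⟩⟩
  choose q hq using hq0
  have hqp : ∀ i : Fin (2*k-1), q (p i) = i := by
    intro i
    rcases hq (p i) with h | h
    · exact (hinj h).symm
    · exact absurd rfl (h.1 i)
  have hqA : ∀ v : V, (∀ j, v ≠ p j) → T.neighborSet v = {p (q v)} := by
    intro v hv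
    rcases hq v with h | h
    · exact absurd h (hv _)
    · exact h.2
  have hadjA : ∀ v : V, (∀ j, v ≠ p j) → T.Adj v (p (q v)) := by
    intro v hv
    rw [← SimpleGraph.mem_neighborSet, hqA v hv]; exact rfl
  -- Lipschitz property
  have lip : ∀ x y : V, T.Adj x y → Nat.dist (q x : ℕ) (q y : ℕ) ≤ 1 := by
    have lip1 : ∀ x y : V, T.Adj x y → (∀ j, x ≠ p j) → Nat.dist (q x : ℕ) (q y : ℕ) ≤ 1 := by
      intro x y hxy hx
      have hy : y = p (q x) := by
        have hmem : y ∈ T.neighborSet x := hxy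
        rw [hqA x hx] at hmem; exact hmem
      rw [hy, hqp]; simp [Nat.dist_self]
    intro x y hxy
    by_cases hx : ∀ j, x ≠ p j
    · exact lip1 x y hxy hx
    · by_cases hy : ∀ j, y ≠ p j
      · rw [Nat.dist_comm]; exact lip1 y x hxy.symm hy
      · push_neg at hx hy
        obtain ⟨i, hi⟩ := hx; obtain ⟨j, hj⟩ := hy
        subst hi; subst hj
        rw [hqp, hqp]
        rcases (hpath i j).mp hxy with h | h
        · rw [Nat.dist_eq_sub_of_le (by omega : (i:ℕ) ≤ (j:ℕ))]; omega
        · rw [Nat.dist_eq_sub_of_le_right (by omega : (j:ℕ) ≤ (i:ℕ))]; omega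
  -- walk lower bound
  have walkb : ∀ (x y : V) (w : T.Walk x y), Nat.dist (q x : ℕ) (q y : ℕ) ≤ w.length := by
    intro x y w
    induction w with
    | nil => simp [Nat.dist_self]
    | @cons a b c hab w ih =>
      have h1 := lip a b hab
      have h2 := Nat.dist.triangle_inequality (q a : ℕ) (q b : ℕ) (q c : ℕ)
      rw [SimpleGraph.Walk.length_cons]; omega
  have lower : ∀ x y : V, Nat.dist (q x : ℕ) (q y : ℕ) ≤ T.dist x y := by
    intro x y
    obtain ⟨w, hw⟩ := hconn.exists_walk_length_eq_dist x y
    rw [← hw]; exact walkb x y w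
  -- path distances
  have upperP : ∀ (d : ℕ) (i j : Fin (2*k-1)), (i:ℕ) + d = (j:ℕ) → T.dist (p i) (p j) ≤ d := by
    intro d
    induction d with
    | zero =>
      intro i j h
      have hij : i = j := Fin.ext (by omega)
      rw [hij]; simp [SimpleGraph.dist_self]
    | succ d ih =>
      intro i j h
      have hi1 : (i:ℕ) + 1 < 2*k-1 := by have := j.isLt; omega
      have hadj : T.Adj (p i) (p ⟨(i:ℕ)+1, hi1⟩) := (hpath i ⟨(i:ℕ)+1, hi1⟩).mpr (Or.inl rfl)
      have h1 : T.dist (p i) (p ⟨(i:ℕ)+1, hi1⟩) = 1 := SimpleGraph.dist_eq_one_iff_adj.mpr hadj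
      have h2 := ih ⟨(i:ℕ)+1, hi1⟩ j (by simpa using by omega)
      have h3 := hconn.dist_triangle (u := p i) (v := p ⟨(i:ℕ)+1, hi1⟩) (w := p j)
      omega
  have distP : ∀ i j : Fin (2*k-1), T.dist (p i) (p j) = Nat.dist (i:ℕ) (j:ℕ) := by
    intro i j
    refine le_antisymm ?_ ?_
    · rcases Nat.le_total (i:ℕ) (j:ℕ) with h | h
      · rw [Nat.dist_eq_sub_of_le h]; exact upperP _ i j (by omega)
      · rw [Nat.dist_eq_sub_of_le_right h, SimpleGraph.dist_comm]
        exact upperP _ j i (by omega)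
    · have hl := lower (p i) (p j); rwa [hqp, hqp] at hl
  -- attached distances
  have distA : ∀ x y : V, (∀ j, x ≠ p j) → y ≠ x → T.dist x y = T.dist (p (q x)) y + 1 := by
    intro x y hx hne
    refine le_antisymm ?_ ?_
    · have h1 : T.dist x (p (q x)) = 1 := SimpleGraph.dist_eq_one_iff_adj.mpr (hadjA x hx)
      have h2 := hconn.dist_triangle (u := x) (v := p (q x)) (w := y)
      omega
    · have hdne : T.dist x y ≠ 0 := by
        rw [Ne, hconn.dist_eq_zero_iff]; exact fun h => hne h.symm
      obtain ⟨w, hw⟩ := hconn.exists_walk_length_eq_dist x y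
      cases w with
      | nil => rw [← hw] at hdne; simp at hdne
      | @cons _ u _ hadj w' =>
        have hu : u = p (q x) := by
          have hmem : u ∈ T.neighborSet x := hadj
          rw [hqA x hx] at hmem; exact hmem
        subst hu
        have h3 : T.dist (p (q x)) y ≤ w'.length := SimpleGraph.dist_le w'
        rw [SimpleGraph.Walk.length_cons] at hw
        omega
  have dPA : ∀ (i : Fin (2*k-1)) (x : V), (∀ j, x ≠ p j) →
      T.dist (p i) x = Nat.dist (q x : ℕ) (i:ℕ) + 1 := by
    intro i x hx
    rw [SimpleGraph.dist_comm, distA x (p i) hx (fun h => hx i h.symm), distP]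
  have dAA : ∀ x y : V, (∀ j, x ≠ p j) → (∀ j, y ≠ p j) → x ≠ y →
      T.dist x y = Nat.dist (q x : ℕ) (q y : ℕ) + 2 := by
    intro x y hx hy hne
    rw [distA x y hx (fun h => hne h.symm), dPA (q x) y hy, Nat.dist_comm]
  -- the partition of vertices
  set P : Finset V := Finset.univ.image p with hPdef
  set A : Finset V := Pᶜ with hAdef
  have hAmem : ∀ x ∈ A, ∀ j, x ≠ p j := by
    intro x hx j hxj
    rw [hAdef, Finset.mem_compl] at hx
    exact hx (by rw [hPdef, hxj]; exact Finset.mem_image_of_mem p (Finset.mem_univ j))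
  have hPcard : P.card = 2*k-1 := by
    rw [hPdef, Finset.card_image_of_injective _ hinj, Finset.card_univ, Fintype.card_fin]
  have hmN : P.card + A.card = n := by
    rw [hAdef, Finset.card_add_card_compl, hcard]
  have hm1 : 1 ≤ A.card := by omega
  -- the structural constraint coming from the pendant count
  have deg2 : ∀ x u w : V, T.Adj x u → T.Adj x w → u ≠ w → (T.neighborSet x).ncard ≠ 1 := by
    intro x u w h1 h2 hne h
    obtain ⟨z, hz⟩ := Set.ncard_eq_one.mp h
    have hu : u = z := by have hm : u ∈ T.neighborSet x := h1; rwa [hz] at hm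
    have hw : w = z := by have hm : w ∈ T.neighborSet x := h2; rwa [hz] at hm
    exact hne (hu.trans hw.symm)
  have constraint : (∀ x ∈ A, ((q x : ℕ)) ≠ 0) ∨ (∀ x ∈ A, ((q x : ℕ)) ≠ 2*k-1-1) := by
    by_contra hc
    push_neg at hc
    obtain ⟨⟨x0, hx0A, hx00⟩, x1, hx1A, hx11⟩ := hc
    have hset : {x : V | (T.neighborSet x).ncard = 1} = ↑A := by
      ext x
      simp only [Set.mem_setOf_eq, Finset.mem_coe]
      constructor
      · intro hx
        by_contra hxA
        obtain ⟨i, rfl⟩ : ∃ i, x = p i := by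
          by_contra h; push_neg at h
          exact hxA (Finset.mem_compl.mpr (fun hmem => by
            obtain ⟨j, _, hj⟩ := Finset.mem_image.mp hmem
            exact h j hj.symm))
        by_cases hi0 : (i:ℕ) = 0
        · have hq0 : q x0 = i := Fin.ext (by omega)
          have h1 : T.Adj (p i) x0 := by
            have ha := hadjA x0 (hAmem x0 hx0A); rw [hq0] at ha; exact ha.symm
          have h2 : T.Adj (p i) (p ⟨1, by omega⟩) :=
            (hpath i ⟨1, by omega⟩).mpr (Or.inl (show (i:ℕ) + 1 = 1 by omega))
          exact deg2 _ _ _ h1 h2 (fun h => hAmem x0 hx0A _ h) hx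
        · by_cases hi1 : (i:ℕ) = 2*k-1-1
          · have hq1 : q x1 = i := Fin.ext (by omega)
            have h1 : T.Adj (p i) x1 := by
              have ha := hadjA x1 (hAmem x1 hx1A); rw [hq1] at ha; exact ha.symm
            have h2 : T.Adj (p i) (p ⟨2*k-1-2, by omega⟩) :=
              (hpath i ⟨2*k-1-2, by omega⟩).mpr (Or.inr (show 2*k-1-2 + 1 = (i:ℕ) by omega))
            exact deg2 _ _ _ h1 h2 (fun h => hAmem x1 hx1A _ h) hx
          · have hilt := i.isLt
            have h1 : T.Adj (p i) (p ⟨(i:ℕ)-1, by omega⟩) :=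
              (hpath i ⟨(i:ℕ)-1, by omega⟩).mpr (Or.inr (show (i:ℕ)-1 + 1 = (i:ℕ) by omega))
            have h2 : T.Adj (p i) (p ⟨(i:ℕ)+1, by omega⟩) :=
              (hpath i ⟨(i:ℕ)+1, by omega⟩).mpr (Or.inl (show (i:ℕ) + 1 = (i:ℕ)+1 by omega))
            refine deg2 _ _ _ h1 h2 (fun h => ?_) hx
            have hvv : ((i:ℕ)-1 : ℕ) = (i:ℕ)+1 := congrArg Fin.val (hinj h)
            omega
      · intro hxA
        exact (hout x (hAmem x hxA)).1
    rw [hset, Set.ncard_coe_finset] at hpend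
    omega
  -- abbreviations for the main sums
  set DAn : ℕ := ∑ x ∈ A, ∑ y ∈ A, Nat.dist ((q x : ℕ)) ((q y : ℕ)) with hDAdef
  set T1n : ℕ := ∑ i ∈ Finset.range (2*k-1), ∑ j ∈ Finset.range (2*k-1), Nat.dist i j with hT1def
  have hT1 : 3 * T1n + (2*k-1) = (2*k-1)^3 := sum_natDist_cube _
  have hDAb : 2 * DAn ≤ (2*k-3) * A.card^2 := by
    have hcon : (∀ x ∈ A, ((fun x => (q x : ℕ)) x) ≠ 0)
        ∨ (∀ x ∈ A, ((fun x => (q x : ℕ)) x) ≠ (2*k-3) + 1) := by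
      rcases constraint with h | h
      · exact Or.inl (fun x hx => by have := h x hx; show (q x : ℕ) ≠ 0; omega)
      · exact Or.inr (fun x hx => by
          have := h x hx; show (q x : ℕ) ≠ (2*k-3) + 1; omega)
    exact sum_dist_pairs_bound A (fun x => (q x : ℕ)) (2*k-3)
      (fun x hx => by have := (q x).isLt; show (q x : ℕ) < (2*k-3) + 2; omega) hcon
  -- splitting the big sum
  have hsplit : ∀ F : V → ℚ, (∑ u : V, F u) = (∑ u ∈ P, F u) + (∑ u ∈ A, F u) := by
    intro F; rw [hAdef]; exact (Finset.sum_add_sum_compl P F).symm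
  have hPsum : ∀ F : V → ℚ, (∑ u ∈ P, F u) = ∑ i : Fin (2*k-1), F (p i) := by
    intro F; rw [hPdef]; exact Finset.sum_image (fun a _ b _ h => hinj h)
  have e0 : (∑ u : V, ∑ v : V, (T.dist u v : ℚ))
      = (∑ i : Fin (2*k-1), ∑ j : Fin (2*k-1), (T.dist (p i) (p j) : ℚ))
        + ((∑ x ∈ A, ∑ i : Fin (2*k-1), (T.dist (p i) x : ℚ))
        + ((∑ x ∈ A, ∑ i : Fin (2*k-1), (T.dist x (p i) : ℚ))
        + (∑ x ∈ A, ∑ y ∈ A, (T.dist x y : ℚ)))) := by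
    rw [hsplit (fun u => ∑ v : V, (T.dist u v : ℚ)),
      hPsum (fun u => ∑ v : V, (T.dist u v : ℚ))]
    have i1 : ∀ i : Fin (2*k-1), (∑ v : V, (T.dist (p i) v : ℚ))
        = (∑ j : Fin (2*k-1), (T.dist (p i) (p j) : ℚ)) + ∑ x ∈ A, (T.dist (p i) x : ℚ) := by
      intro i; rw [hsplit (fun v => (T.dist (p i) v : ℚ)), hPsum]
    have i2 : ∀ x : V, (∑ v : V, (T.dist x v : ℚ))
        = (∑ i : Fin (2*k-1), (T.dist x (p i) : ℚ)) + ∑ y ∈ A, (T.dist x y : ℚ) := by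
      intro x; rw [hsplit (fun v => (T.dist x v : ℚ)), hPsum]
    rw [Finset.sum_congr rfl (fun i _ => i1 i), Finset.sum_congr rfl (fun x (_ : x ∈ A) => i2 x)]
    rw [Finset.sum_add_distrib, Finset.sum_add_distrib]
    have swap : (∑ i : Fin (2*k-1), ∑ x ∈ A, (T.dist (p i) x : ℚ))
        = ∑ x ∈ A, ∑ i : Fin (2*k-1), (T.dist (p i) x : ℚ) := Finset.sum_comm
    rw [swap]; ring
  -- path-path block
  have hPP : (∑ i : Fin (2*k-1), ∑ j : Fin (2*k-1), (T.dist (p i) (p j) : ℚ)) = (T1n : ℚ) := by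
    have e : (∑ i : Fin (2*k-1), ∑ j : Fin (2*k-1), Nat.dist (i:ℕ) (j:ℕ)) = T1n := by
      rw [hT1def, ← Fin.sum_univ_eq_sum_range (fun i => ∑ j ∈ Finset.range (2*k-1), Nat.dist i j)]
      exact Finset.sum_congr rfl fun i _ =>
        Fin.sum_univ_eq_sum_range (fun j => Nat.dist (i:ℕ) j) (2*k-1)
    rw [← e]; push_cast
    exact Finset.sum_congr rfl fun i _ => Finset.sum_congr rfl fun j _ => by
      exact_mod_cast congrArg (Nat.cast : ℕ → ℚ) (distP i j)
  -- path-attached block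
  have hPAb : ∀ x ∈ A, (∑ i : Fin (2*k-1), (T.dist (p i) x : ℚ))
      ≤ ((((2*k-1) * (2*k-1+1) : ℕ) : ℚ)) / 2 := by
    intro x hx
    have e1 : ∀ i : Fin (2*k-1), (T.dist (p i) x : ℚ)
        = ((Nat.dist ((q x:ℕ)) (i:ℕ) : ℕ) : ℚ) + 1 := by
      intro i; rw [dPA i x (hAmem x hx)]; push_cast; ring
    rw [Finset.sum_congr rfl fun i _ => e1 i, Finset.sum_add_distrib]
    simp only [Finset.sum_const, Finset.card_univ, Fintype.card_fin, nsmul_eq_mul, mul_one]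
    have e2 : (∑ i : Fin (2*k-1), ((Nat.dist ((q x:ℕ)) (i:ℕ) : ℕ) : ℚ))
        = ((∑ i ∈ Finset.range (2*k-1), Nat.dist ((q x:ℕ)) i : ℕ) : ℚ) := by
      push_cast
      exact Fin.sum_univ_eq_sum_range (fun i => ((Nat.dist ((q x:ℕ)) i : ℕ) : ℚ)) (2*k-1)
    rw [e2]
    have hb := sum_natDist_le (2*k-1) ((q x:ℕ)) (q x).isLt
    have hb' : ((2 * (∑ i ∈ Finset.range (2*k-1), Nat.dist ((q x:ℕ)) i) + 2*(2*k-1) : ℕ) : ℚ)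
        ≤ (((2*k-1) * ((2*k-1) + 1) : ℕ) : ℚ) := by exact_mod_cast hb
    push_cast at hb'
    push_cast
    linarith
  have hPAsum : (∑ x ∈ A, ∑ i : Fin (2*k-1), (T.dist (p i) x : ℚ))
      ≤ (A.card : ℚ) * (((((2*k-1) * (2*k-1+1) : ℕ) : ℚ)) / 2) := by
    calc (∑ x ∈ A, ∑ i : Fin (2*k-1), (T.dist (p i) x : ℚ))
        ≤ ∑ _x ∈ A, (((((2*k-1) * (2*k-1+1) : ℕ) : ℚ)) / 2) := Finset.sum_le_sum hPAb
      _ = _ := by rw [Finset.sum_const, nsmul_eq_mul]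
  have hAPsum : (∑ x ∈ A, ∑ i : Fin (2*k-1), (T.dist x (p i) : ℚ))
      = (∑ x ∈ A, ∑ i : Fin (2*k-1), (T.dist (p i) x : ℚ)) :=
    Finset.sum_congr rfl fun x _ => Finset.sum_congr rfl fun i _ => by
      rw [SimpleGraph.dist_comm]
  -- attached-attached block
  have hAA : (∑ x ∈ A, ∑ y ∈ A, (T.dist x y : ℚ))
      = (DAn : ℚ) + (2*(A.card:ℚ)^2 - 2*(A.card:ℚ)) := by
    have per : ∀ x ∈ A, ∀ y ∈ A, (T.dist x y : ℚ)
        = ((Nat.dist ((q x:ℕ)) ((q y:ℕ)) : ℕ) : ℚ) + (if x = y then 0 else 2) := by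
      intro x hx y hy
      by_cases h : x = y
      · subst h; simp [SimpleGraph.dist_self, Nat.dist_self]
      · rw [dAA x y (hAmem x hx) (hAmem y hy) h, if_neg h]; push_cast; ring
    rw [Finset.sum_congr rfl fun x hx => Finset.sum_congr rfl fun y hy => per x hx y hy]
    have e3 : ∀ x ∈ A,
        (∑ y ∈ A, (((Nat.dist ((q x:ℕ)) ((q y:ℕ)) : ℕ) : ℚ) + (if x = y then 0 else 2)))
        = (∑ y ∈ A, ((Nat.dist ((q x:ℕ)) ((q y:ℕ)) : ℕ) : ℚ)) + (2*(A.card:ℚ) - 2) := by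
      intro x hx
      rw [Finset.sum_add_distrib]
      congr 1
      have hsw : ∀ y ∈ A, (if x = y then (0:ℚ) else 2) = 2 - (if x = y then 2 else 0) := by
        intro y _; by_cases h : x = y <;> simp [h]
      rw [Finset.sum_congr rfl hsw, Finset.sum_sub_distrib, Finset.sum_const, nsmul_eq_mul,
        Finset.sum_ite_eq A x (fun _ => (2:ℚ)), if_pos hx]
      ring
    rw [Finset.sum_congr rfl e3, Finset.sum_add_distrib, Finset.sum_const, nsmul_eq_mul]
    have e4 : (∑ x ∈ A, ∑ y ∈ A, ((Nat.dist ((q x:ℕ)) ((q y:ℕ)) : ℕ) : ℚ)) = (DAn : ℚ) := by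
      rw [hDAdef]; push_cast; ring
    rw [e4]; ring
  -- cast facts
  have hkq : (2:ℚ) ≤ (k:ℚ) := by exact_mod_cast hk
  have hmq : (1:ℚ) ≤ (A.card:ℚ) := by exact_mod_cast hm1
  have hNq : ((2*k-1 : ℕ) : ℚ) = 2*(k:ℚ) - 1 := by
    rw [Nat.cast_sub (by omega : 1 ≤ 2*k)]; push_cast; ring
  have hLq : ((2*k-3 : ℕ) : ℚ) = 2*(k:ℚ) - 3 := by
    rw [Nat.cast_sub (by omega : 3 ≤ 2*k)]; push_cast; ring
  have hnn : n = (2*k-1) + A.card := by omega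
  have hnq : (n:ℚ) = ((2*k-1:ℕ) : ℚ) + (A.card : ℚ) := by exact_mod_cast hnn
  have hT1q : 3*(T1n:ℚ) + ((2*k-1:ℕ):ℚ) = ((2*k-1:ℕ):ℚ)^3 := by exact_mod_cast hT1
  have hDAq : 2*(DAn:ℚ) ≤ ((2*k-3:ℕ):ℚ) * (A.card:ℚ)^2 := by exact_mod_cast hDAb
  have hprod : (((2*k-1) * (2*k-1+1) : ℕ) : ℚ) = ((2*k-1:ℕ):ℚ) * (((2*k-1:ℕ):ℚ) + 1) := by
    push_cast; ring
  -- goal reduction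
  have hC : ((n.choose 2 : ℕ) : ℚ) = (n:ℚ) * ((n:ℚ) - 1) / 2 := Nat.cast_choose_two ℚ n
  have hn4 : (4:ℚ) ≤ (n:ℚ) := by exact_mod_cast (by omega : 4 ≤ n)
  have hCpos : (0:ℚ) < ((n.choose 2 : ℕ) : ℚ) := by rw [hC]; nlinarith
  unfold avgDist wiener
  rw [hcard, div_lt_iff₀ hCpos, hC, e0, hPP, hAA, hAPsum]
  rw [hNq] at hT1q hnq
  rw [hLq] at hDAq
  rw [hprod, hNq] at hPAsum
  rw [hnq]
  have ha : (0:ℚ) ≤ (k:ℚ) - 2 := by linarith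
  have hb : (0:ℚ) ≤ (A.card:ℚ) - 1 := by linarith
  nlinarith [hPAsum, hT1q, hDAq, ha, hb, mul_nonneg ha hb,
    mul_nonneg (mul_nonneg ha ha) ha, mul_nonneg ha ha, mul_nonneg hb hb,
    mul_nonneg (mul_nonneg ha hb) hb, mul_nonneg (mul_nonneg ha ha) hb]
end

section
/- Let T be the tree of order n obtained from a path v_1v_2...v_{2k} (k ≥ 2) by attaching a pendent vertices to v_1, n − 2k − a − b pendent vertices to v_3, and b pendent vertices to v_{2k}. Then W(T) = −2a² + 2(n−3)a − (2k−3)b² + (2k−3)(n−2k+2)b + n² + (2k−5)(k−1)n − (1/3)k(8k² − 30k + 31). -/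
open SimpleGraph Finset

/-- The tree obtained from a path `v_1 v_2 ... v_{2k}` by attaching `a` pendent vertices
to `v_1`, `c` pendent vertices to `v_3`, and `b` pendent vertices to `v_{2k}`. -/
def T12 (k a c b : ℕ) : SimpleGraph (Fin (2 * k + a + c + b)) :=
  SimpleGraph.fromRel (fun i j =>
    ((i : ℕ) + 1 = (j : ℕ) ∧ (j : ℕ) < 2 * k) ∨
    (2 * k ≤ (i : ℕ) ∧ (i : ℕ) < 2 * k + a ∧ (j : ℕ) = 0) ∨
    (2 * k + a ≤ (i : ℕ) ∧ (i : ℕ) < 2 * k + a + c ∧ (j : ℕ) = 2) ∨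
    (2 * k + a + c ≤ (i : ℕ) ∧ (j : ℕ) = 2 * k - 1))

namespace Stmt12

/-- location on the path -/
def loc (k a c i : ℕ) : ℕ :=
  if i < 2*k then i else if i < 2*k+a then 0 else if i < 2*k+a+c then 2 else 2*k-1

/-- 1 if pendant vertex -/
def ext (k i : ℕ) : ℕ := if i < 2*k then 0 else 1

/-- |x - y| on ℕ -/
def dd (x y : ℕ) : ℕ := (x - y) + (y - x)

/-- the distance formula -/
def Dn (k a c i j : ℕ) : ℕ :=
  if i = j then 0 else dd (loc k a c i) (loc k a c j) + ext k i + ext k j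

variable {k a c b : ℕ}

lemma loc_lt (hk : 2 ≤ k) (i : ℕ) : loc k a c i < 2*k := by
  unfold loc; split_ifs <;> omega

lemma adj_struct (hk : 2 ≤ k) {u v : Fin (2*k+a+c+b)} (h : (T12 k a c b).Adj u v) :
    (loc k a c u.val = loc k a c v.val ∧ ext k u.val + ext k v.val = 1) ∨
    (ext k u.val = 0 ∧ ext k v.val = 0 ∧ dd (loc k a c u.val) (loc k a c v.val) = 1) := by
  rw [T12, fromRel_adj] at h
  obtain ⟨-, h⟩ := h
  unfold loc ext dd
  split_ifs <;> omega

lemma dn_lip (hk : 2 ≤ k) {u v : Fin (2*k+a+c+b)} (h : (T12 k a c b).Adj u v)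
    (w : Fin (2*k+a+c+b)) :
    Dn k a c u.val w.val ≤ Dn k a c v.val w.val + 1 := by
  have hs := adj_struct hk h
  have hne : u.val ≠ v.val := fun hh => h.ne (Fin.ext hh)
  by_cases h1 : u.val = w.val
  · simp [Dn, h1]
  by_cases h2 : v.val = w.val
  · have : v = w := Fin.ext h2
    subst this
    simp only [Dn, if_neg h1, if_neg hne]
    unfold dd at hs ⊢
    omega
  · simp only [Dn, if_neg h1, if_neg h2]
    unfold dd at hs ⊢
    omega

lemma le_walk (hk : 2 ≤ k) : ∀ {u v : Fin (2*k+a+c+b)} (p : (T12 k a c b).Walk u v),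
    Dn k a c u.val v.val ≤ p.length := by
  intro u v p
  induction p with
  | nil => simp [Dn]
  | @cons u x v h p ih =>
    calc Dn k a c u.val v.val ≤ Dn k a c x.val v.val + 1 := dn_lip hk h v
    _ ≤ p.length + 1 := by omega
    _ = (SimpleGraph.Walk.cons h p).length := (SimpleGraph.Walk.length_cons _ _).symm

lemma pwalk : ∀ (m : ℕ) (x y : Fin (2*k+a+c+b)), x.val + m = y.val → y.val < 2*k →
    ∃ p : (T12 k a c b).Walk x y, p.length = m := by
  intro m
  induction m with
  | zero =>
    intro x y hxy _
    have : x = y := Fin.ext (by omega)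
    subst this
    exact ⟨SimpleGraph.Walk.nil, rfl⟩
  | succ m ih =>
    intro x y hxy hy
    have hz : x.val + m < 2*k+a+c+b := by omega
    set z : Fin (2*k+a+c+b) := ⟨x.val + m, hz⟩ with hzdef
    obtain ⟨p, hp⟩ := ih x z rfl (by simp [hzdef]; omega)
    have hadj : (T12 k a c b).Adj z y := by
      rw [T12, fromRel_adj]
      refine ⟨fun hh => by simp [hzdef, Fin.ext_iff] at hh; omega, Or.inl (Or.inl ?_)⟩
      simp [hzdef]; omega
    exact ⟨p.concat hadj, by simp [SimpleGraph.Walk.length_concat, hp]⟩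

lemma pwalk' (x y : Fin (2*k+a+c+b)) (hx : x.val < 2*k) (hy : y.val < 2*k) :
    ∃ p : (T12 k a c b).Walk x y, p.length = dd x.val y.val := by
  rcases le_total x.val y.val with h | h
  · obtain ⟨p, hp⟩ := pwalk (y.val - x.val) x y (by omega) hy
    exact ⟨p, by unfold dd; omega⟩
  · obtain ⟨p, hp⟩ := pwalk (x.val - y.val) y x (by omega) hx
    exact ⟨p.reverse, by simp [SimpleGraph.Walk.length_reverse, hp]; unfold dd; omega⟩

lemma anchor (hk : 2 ≤ k) (u : Fin (2*k+a+c+b)) :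
    ∃ x : Fin (2*k+a+c+b), x.val = loc k a c u.val ∧
      ∃ p : (T12 k a c b).Walk u x, p.length = ext k u.val := by
  have hpf : loc k a c u.val < 2*k+a+c+b := by
    have := loc_lt (a := a) (c := c) hk u.val; omega
  refine ⟨⟨loc k a c u.val, hpf⟩, rfl, ?_⟩
  by_cases h : u.val < 2*k
  · have he : u = (⟨loc k a c u.val, hpf⟩ : Fin (2*k+a+c+b)) := Fin.ext (by simp [loc, h])
    exact ⟨SimpleGraph.Walk.nil.copy rfl he, by simp [ext, h]⟩
  · have hu : u.val < 2*k+a+c+b := u.isLt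
    have hadj : (T12 k a c b).Adj u ⟨loc k a c u.val, hpf⟩ := by
      rw [T12, fromRel_adj]
      constructor
      · intro hh
        rw [Fin.ext_iff] at hh
        have := loc_lt (a := a) (c := c) hk u.val
        simp at hh
        omega
      · left
        unfold loc
        split_ifs with h1 h2
        · exact Or.inr (Or.inl ⟨by omega, h1, rfl⟩)
        · exact Or.inr (Or.inr (Or.inl ⟨by omega, h2, rfl⟩))
        · exact Or.inr (Or.inr (Or.inr ⟨by omega, rfl⟩))
    exact ⟨hadj.toWalk, by simp [ext, h]⟩

lemma exists_walk (hk : 2 ≤ k) (u v : Fin (2*k+a+c+b)) :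
    ∃ p : (T12 k a c b).Walk u v, p.length ≤ Dn k a c u.val v.val := by
  by_cases h : u = v
  · subst h; exact ⟨SimpleGraph.Walk.nil, by simp [Dn]⟩
  · obtain ⟨x, hx, p1, hp1⟩ := anchor hk u
    obtain ⟨y, hy, p3, hp3⟩ := anchor hk v
    obtain ⟨p2, hp2⟩ := pwalk' x y (hx ▸ loc_lt hk u.val) (hy ▸ loc_lt hk v.val)
    refine ⟨p1.append (p2.append p3.reverse), ?_⟩
    have hne : u.val ≠ v.val := fun hh => h (Fin.ext hh)
    simp only [SimpleGraph.Walk.length_append, SimpleGraph.Walk.length_reverse,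
      hp1, hp2, hp3, Dn, if_neg hne, hx, hy]
    omega

lemma dist_eq (hk : 2 ≤ k) (u v : Fin (2*k+a+c+b)) :
    (T12 k a c b).dist u v = Dn k a c u.val v.val := by
  obtain ⟨p, hp⟩ := exists_walk hk u v
  refine le_antisymm ((SimpleGraph.dist_le p).trans hp) ?_
  obtain ⟨q, hq⟩ := (SimpleGraph.Reachable.exists_walk_length_eq_dist ⟨p⟩)
  rw [← hq]
  exact le_walk hk q

/-! ### Summation lemmas -/

lemma cast_dd (x y : ℕ) : ((dd x y : ℕ) : ℚ) = |(x:ℚ) - y| := by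
  rcases le_total x y with h | h
  · have h1 : dd x y = y - x := by unfold dd; omega
    rw [h1, Nat.cast_sub h, abs_sub_comm, abs_of_nonneg
      (sub_nonneg.mpr (by exact_mod_cast h))]
  · have h1 : dd x y = x - y := by unfold dd; omega
    rw [h1, Nat.cast_sub h, abs_of_nonneg (sub_nonneg.mpr (by exact_mod_cast h))]

lemma cast_Dn (i j : ℕ) : ((Dn k a c i j : ℕ):ℚ)
    = |(loc k a c i : ℚ) - (loc k a c j : ℚ)|
      + (if i = j then 0 else ((ext k i : ℚ) + (ext k j : ℚ))) := by
  by_cases h : i = j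
  · simp [Dn, h]
  · simp only [Dn, if_neg h]
    push_cast [cast_dd]
    ring

lemma sum_range_add' (f : ℕ → ℚ) (m n : ℕ) :
    ∑ i ∈ range (m+n), f i = (∑ i ∈ range m, f i) + ∑ i ∈ range n, f (m+i) := by
  rw [← Finset.sum_range_add_sum_Ico f (Nat.le_add_right m n), Finset.sum_Ico_eq_sum_range]
  simp

lemma split4 (f : ℕ → ℚ) :
    ∑ i ∈ range (2*k+a+c+b), f i
      = (∑ i ∈ range (2*k), f i) + (∑ i ∈ range a, f (2*k+i))
        + (∑ i ∈ range c, f (2*k+a+i)) + ∑ i ∈ range b, f (2*k+a+c+i) := by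
  rw [sum_range_add' f (2*k+a+c) b, sum_range_add' f (2*k+a) c, sum_range_add' f (2*k) a]

lemma loc_path {i : ℕ} (h : i < 2*k) : loc k a c i = i := if_pos h
lemma loc_A {i : ℕ} (h : i < a) : loc k a c (2*k+i) = 0 := by
  unfold loc; split_ifs <;> omega
lemma loc_C {i : ℕ} (h : i < c) : loc k a c (2*k+a+i) = 2 := by
  unfold loc; split_ifs <;> omega
lemma loc_B (i : ℕ) : loc k a c (2*k+a+c+i) = 2*k-1 := by
  unfold loc; split_ifs <;> omega
lemma ext_lt {i : ℕ} (h : i < 2*k) : ext k i = 0 := if_pos h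
lemma ext_ge {i : ℕ} (h : 2*k ≤ i) : ext k i = 1 := if_neg (by omega)

lemma gauss (m : ℕ) : ∑ i ∈ range m, (i:ℚ) = m*(m-1)/2 := by
  induction m with
  | zero => simp
  | succ m ih => rw [Finset.sum_range_succ, ih]; push_cast; ring

lemma sumabsn (m : ℕ) : ∑ j ∈ range m, |(j:ℚ)| = m*(m-1)/2 := by
  rw [← gauss]; exact Finset.sum_congr rfl fun j _ => abs_of_nonneg (by positivity)

lemma sum_cross (m : ℕ) : ∑ j ∈ range m, |(m:ℚ) - j| = m*(m+1)/2 := by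
  have h : ∀ j ∈ range m, |(m:ℚ) - j| = (m:ℚ) - j := by
    intro j hj
    have hj' : (j:ℚ) ≤ m := by exact_mod_cast (mem_range.mp hj).le
    exact abs_of_nonneg (by linarith)
  rw [Finset.sum_congr rfl h, Finset.sum_sub_distrib, gauss, Finset.sum_const,
    Finset.card_range, nsmul_eq_mul]
  ring

lemma sum_end (m : ℕ) : ∑ j ∈ range m, |((m:ℚ)-1) - j| = m*(m-1)/2 := by
  have h : ∀ j ∈ range m, |((m:ℚ)-1) - j| = ((m:ℚ)-1) - j := by
    intro j hj
    have hj' : (j:ℚ) + 1 ≤ m := by exact_mod_cast mem_range.mp hj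
    exact abs_of_nonneg (by linarith)
  rw [Finset.sum_congr rfl h, Finset.sum_sub_distrib, gauss, Finset.sum_const,
    Finset.card_range, nsmul_eq_mul]
  ring

lemma sum_two {m : ℕ} (h : 4 ≤ m) : ∑ j ∈ range m, |(2:ℚ) - j| = m*(m-1)/2 - 2*m + 6 := by
  induction m, h using Nat.le_induction with
  | base =>
    rw [show (4:ℕ) = 3+1 from rfl, Finset.sum_range_succ, Finset.sum_range_succ,
      Finset.sum_range_succ, Finset.sum_range_succ, Finset.sum_range_zero]
    norm_num
  | succ m hm ih =>
    have h4 : (4:ℚ) ≤ m := by exact_mod_cast hm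
    rw [Finset.sum_range_succ, ih, abs_of_nonpos (by linarith)]
    push_cast; ring

lemma sumP (m : ℕ) : ∑ i ∈ range m, ∑ j ∈ range m, |(i:ℚ) - (j:ℚ)| = ((m:ℚ)^3 - m)/3 := by
  induction m with
  | zero => simp
  | succ m ih =>
    have inner : ∀ i ∈ range (m+1), ∑ j ∈ range (m+1), |(i:ℚ) - j|
        = (∑ j ∈ range m, |(i:ℚ) - j|) + |(i:ℚ) - m| := fun i _ => Finset.sum_range_succ _ m
    rw [Finset.sum_congr rfl inner, Finset.sum_add_distrib,
      Finset.sum_range_succ (fun i => ∑ j ∈ range m, |(i:ℚ) - j|),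
      Finset.sum_range_succ (fun i => |(i:ℚ) - (m:ℚ)|), ih]
    have e1 : ∑ j ∈ range m, |(m:ℚ) - j| = m*(m+1)/2 := sum_cross m
    have e2 : ∑ i ∈ range m, |(i:ℚ) - m| = m*(m+1)/2 := by
      rw [← e1]; exact Finset.sum_congr rfl fun i _ => abs_sub_comm _ _
    rw [e1, e2, sub_self, abs_zero]
    push_cast; ring

lemma sum_ext : ∑ i ∈ range (2*k+a+c+b), ((ext k i : ℕ):ℚ) = (a:ℚ) + c + b := by
  rw [split4]
  rw [Finset.sum_congr rfl (fun i hi => by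
        rw [ext_lt (mem_range.mp hi)] : ∀ i ∈ range (2*k), ((ext k i : ℕ):ℚ) = ((0:ℕ):ℚ)),
      Finset.sum_congr rfl (fun i _ => by
        rw [ext_ge (by omega)] : ∀ i ∈ range a, ((ext k (2*k+i) : ℕ):ℚ) = ((1:ℕ):ℚ)),
      Finset.sum_congr rfl (fun i _ => by
        rw [ext_ge (by omega)] : ∀ i ∈ range c, ((ext k (2*k+a+i) : ℕ):ℚ) = ((1:ℕ):ℚ)),
      Finset.sum_congr rfl (fun i _ => by
        rw [ext_ge (by omega)] : ∀ i ∈ range b, ((ext k (2*k+a+c+i) : ℕ):ℚ) = ((1:ℕ):ℚ))]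
  simp

lemma sumE : ∑ i ∈ range (2*k+a+c+b), ∑ j ∈ range (2*k+a+c+b),
      (if i = j then (0:ℚ) else (ext k i : ℚ) + (ext k j : ℚ))
    = 2*((2*(k:ℚ)+a+c+b) - 1)*((a:ℚ)+c+b) := by
  have inner : ∀ i ∈ range (2*k+a+c+b),
      (∑ j ∈ range (2*k+a+c+b), if i = j then (0:ℚ) else (ext k i : ℚ) + (ext k j : ℚ))
        = ((2*k+a+c+b : ℕ):ℚ)*(ext k i : ℚ) + ((a:ℚ)+c+b) - 2*(ext k i : ℚ) := by
    intro i hi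
    have hsplit : ∀ j, (if i = j then (0:ℚ) else (ext k i : ℚ) + ext k j)
        = ((ext k i : ℚ) + ext k j) - (if i = j then ((ext k i : ℚ) + ext k j) else 0) := by
      intro j; split_ifs <;> ring
    rw [Finset.sum_congr rfl (fun j _ => hsplit j), Finset.sum_sub_distrib,
      Finset.sum_add_distrib, Finset.sum_const, Finset.card_range, sum_ext,
      Finset.sum_ite_eq (range (2*k+a+c+b)) i (fun j => (ext k i : ℚ) + ext k j),
      if_pos hi, nsmul_eq_mul]
    ring
  rw [Finset.sum_congr rfl inner, Finset.sum_sub_distrib, Finset.sum_add_distrib,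
    Finset.sum_const, Finset.card_range, ← Finset.mul_sum, sum_ext, ← Finset.mul_sum, sum_ext]
  push_cast
  ring

lemma sumH (hk : 2 ≤ k) (x : ℚ) :
    ∑ j ∈ range (2*k+a+c+b), |x - (loc k a c j : ℚ)|
      = (∑ j ∈ range (2*k), |x - (j:ℚ)|) + (a:ℚ)*|x| + (c:ℚ)*|x-2|
        + (b:ℚ)*|x - (2*(k:ℚ)-1)| := by
  have hcast : ((2*k-1 : ℕ):ℚ) = 2*(k:ℚ)-1 := by
    rw [Nat.cast_sub (by omega : 1 ≤ 2*k)]; push_cast; ring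
  rw [split4 (f := fun j => |x - (loc k a c j : ℚ)|),
    Finset.sum_congr rfl (fun j hj => by
      rw [loc_path (mem_range.mp hj)] : ∀ j ∈ range (2*k),
        |x - (loc k a c j : ℚ)| = |x - (j:ℚ)|),
    Finset.sum_congr rfl (fun j hj => by
      rw [loc_A (mem_range.mp hj)]; norm_num : ∀ j ∈ range a,
        |x - (loc k a c (2*k+j) : ℚ)| = |x|),
    Finset.sum_congr rfl (fun j hj => by
      rw [loc_C (mem_range.mp hj)]; norm_num : ∀ j ∈ range c,
        |x - (loc k a c (2*k+a+j) : ℚ)| = |x-2|),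
    Finset.sum_congr rfl (fun j _ => by
      rw [loc_B, hcast] : ∀ j ∈ range b,
        |x - (loc k a c (2*k+a+c+j) : ℚ)| = |x - (2*(k:ℚ)-1)|),
    Finset.sum_const, Finset.sum_const, Finset.sum_const, Finset.card_range,
    Finset.card_range, Finset.card_range, nsmul_eq_mul, nsmul_eq_mul, nsmul_eq_mul]

lemma sumL (hk : 2 ≤ k) :
    ∑ i ∈ range (2*k+a+c+b), ∑ j ∈ range (2*k+a+c+b),
        |(loc k a c i : ℚ) - (loc k a c j : ℚ)|
      = (((2*(k:ℚ))^3 - 2*k)/3 + a*(2*(k:ℚ)*(2*(k:ℚ)-1)/2)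
          + c*(2*(k:ℚ)*(2*(k:ℚ)-1)/2 - 4*k + 6) + b*(2*(k:ℚ)*(2*(k:ℚ)-1)/2))
        + a*((2*(k:ℚ)*(2*(k:ℚ)-1)/2) + c*2 + b*(2*(k:ℚ)-1))
        + c*((2*(k:ℚ)*(2*(k:ℚ)-1)/2 - 4*k + 6) + a*2 + b*(2*(k:ℚ)-3))
        + b*((2*(k:ℚ)*(2*(k:ℚ)-1)/2) + a*(2*(k:ℚ)-1) + c*(2*(k:ℚ)-3)) := by
  have hk1 : (2:ℚ) ≤ k := by exact_mod_cast hk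
  -- component sums over the path chunk
  have hP : ∑ i ∈ range (2*k), ∑ j ∈ range (2*k), |(i:ℚ) - (j:ℚ)|
      = ((2*(k:ℚ))^3 - 2*k)/3 := by
    have := sumP (2*k); push_cast at this ⊢; linarith
  have hg : ∑ j ∈ range (2*k), |(j:ℚ)| = 2*(k:ℚ)*(2*(k:ℚ)-1)/2 := by
    have := sumabsn (2*k); push_cast at this ⊢; linarith
  have h2 : ∑ j ∈ range (2*k), |(j:ℚ) - 2| = 2*(k:ℚ)*(2*(k:ℚ)-1)/2 - 4*k + 6 := by
    have h := sum_two (m := 2*k) (by omega)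
    rw [show (∑ j ∈ range (2*k), |(j:ℚ) - 2|) = ∑ j ∈ range (2*k), |(2:ℚ) - (j:ℚ)| from
      Finset.sum_congr rfl fun j _ => abs_sub_comm _ _, h]
    push_cast; ring
  have hE : ∑ j ∈ range (2*k), |(j:ℚ) - (2*(k:ℚ)-1)| = 2*(k:ℚ)*(2*(k:ℚ)-1)/2 := by
    have h := sum_end (m := 2*k)
    push_cast at h
    rw [show (∑ j ∈ range (2*k), |(j:ℚ) - (2*(k:ℚ)-1)|)
        = ∑ j ∈ range (2*k), |2*(k:ℚ) - 1 - (j:ℚ)| from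
      Finset.sum_congr rfl fun j _ => by rw [abs_sub_comm]]
    rw [h]
  have h0 : ∑ j ∈ range (2*k), |(0:ℚ) - (j:ℚ)| = 2*(k:ℚ)*(2*(k:ℚ)-1)/2 := by
    rw [show (∑ j ∈ range (2*k), |(0:ℚ) - (j:ℚ)|) = ∑ j ∈ range (2*k), |(j:ℚ)| from
      Finset.sum_congr rfl fun j _ => by rw [zero_sub, abs_neg], hg]
  have h2' : ∑ j ∈ range (2*k), |(2:ℚ) - (j:ℚ)| = 2*(k:ℚ)*(2*(k:ℚ)-1)/2 - 4*k + 6 := by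
    rw [show (∑ j ∈ range (2*k), |(2:ℚ) - (j:ℚ)|) = ∑ j ∈ range (2*k), |(j:ℚ) - 2| from
      Finset.sum_congr rfl fun j _ => abs_sub_comm _ _, h2]
  have hE' : ∑ j ∈ range (2*k), |(2*(k:ℚ)-1) - (j:ℚ)| = 2*(k:ℚ)*(2*(k:ℚ)-1)/2 := by
    rw [show (∑ j ∈ range (2*k), |(2*(k:ℚ)-1) - (j:ℚ)|)
        = ∑ j ∈ range (2*k), |(j:ℚ) - (2*(k:ℚ)-1)| from
      Finset.sum_congr rfl fun j _ => abs_sub_comm _ _, hE]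
  -- rewrite inner sums via sumH
  rw [Finset.sum_congr rfl (fun i _ => sumH hk ((loc k a c i : ℚ)))]
  rw [split4 (f := fun i => (∑ j ∈ range (2*k), |(loc k a c i : ℚ) - (j:ℚ)|)
      + (a:ℚ)*|(loc k a c i : ℚ)| + (c:ℚ)*|(loc k a c i : ℚ)-2|
      + (b:ℚ)*|(loc k a c i : ℚ) - (2*(k:ℚ)-1)|)]
  -- chunk 1 : path vertices
  have hc1 : ∑ i ∈ range (2*k), ((∑ j ∈ range (2*k), |(loc k a c i : ℚ) - (j:ℚ)|)
      + (a:ℚ)*|(loc k a c i : ℚ)| + (c:ℚ)*|(loc k a c i : ℚ)-2|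
      + (b:ℚ)*|(loc k a c i : ℚ) - (2*(k:ℚ)-1)|)
      = ((2*(k:ℚ))^3 - 2*k)/3 + a*(2*(k:ℚ)*(2*(k:ℚ)-1)/2)
        + c*(2*(k:ℚ)*(2*(k:ℚ)-1)/2 - 4*k + 6) + b*(2*(k:ℚ)*(2*(k:ℚ)-1)/2) := by
    rw [Finset.sum_congr rfl (fun i hi => by rw [loc_path (mem_range.mp hi)] :
      ∀ i ∈ range (2*k), ((∑ j ∈ range (2*k), |(loc k a c i : ℚ) - (j:ℚ)|)
        + (a:ℚ)*|(loc k a c i : ℚ)| + (c:ℚ)*|(loc k a c i : ℚ)-2|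
        + (b:ℚ)*|(loc k a c i : ℚ) - (2*(k:ℚ)-1)|)
        = ((∑ j ∈ range (2*k), |(i:ℚ) - (j:ℚ)|)
        + (a:ℚ)*|(i:ℚ)| + (c:ℚ)*|(i:ℚ)-2| + (b:ℚ)*|(i:ℚ) - (2*(k:ℚ)-1)|))]
    rw [Finset.sum_add_distrib, Finset.sum_add_distrib, Finset.sum_add_distrib,
      ← Finset.mul_sum, ← Finset.mul_sum, ← Finset.mul_sum, hP, hg, h2, hE]
  -- chunk 2 : pendants at v1
  have hc2 : ∑ i ∈ range a, ((∑ j ∈ range (2*k), |(loc k a c (2*k+i) : ℚ) - (j:ℚ)|)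
      + (a:ℚ)*|(loc k a c (2*k+i) : ℚ)| + (c:ℚ)*|(loc k a c (2*k+i) : ℚ)-2|
      + (b:ℚ)*|(loc k a c (2*k+i) : ℚ) - (2*(k:ℚ)-1)|)
      = a*((2*(k:ℚ)*(2*(k:ℚ)-1)/2) + c*2 + b*(2*(k:ℚ)-1)) := by
    rw [Finset.sum_congr rfl (fun i hi => by
        rw [loc_A (mem_range.mp hi)]; push_cast
        rw [h0, abs_zero, mul_zero, add_zero,
          show |(0:ℚ) - 2| = 2 by norm_num,
          show |(0:ℚ) - (2*(k:ℚ)-1)| = 2*(k:ℚ)-1 by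
            rw [show (0:ℚ) - (2*(k:ℚ)-1) = -(2*(k:ℚ)-1) by ring, abs_neg]
            exact abs_of_nonneg (by linarith)] :
      ∀ i ∈ range a, ((∑ j ∈ range (2*k), |(loc k a c (2*k+i) : ℚ) - (j:ℚ)|)
        + (a:ℚ)*|(loc k a c (2*k+i) : ℚ)| + (c:ℚ)*|(loc k a c (2*k+i) : ℚ)-2|
        + (b:ℚ)*|(loc k a c (2*k+i) : ℚ) - (2*(k:ℚ)-1)|)
        = 2*(k:ℚ)*(2*(k:ℚ)-1)/2 + (c:ℚ)*2 + (b:ℚ)*(2*(k:ℚ)-1)),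
      Finset.sum_const, Finset.card_range, nsmul_eq_mul]
    try ring
  -- chunk 3 : pendants at v3
  have hc3 : ∑ i ∈ range c, ((∑ j ∈ range (2*k), |(loc k a c (2*k+a+i) : ℚ) - (j:ℚ)|)
      + (a:ℚ)*|(loc k a c (2*k+a+i) : ℚ)| + (c:ℚ)*|(loc k a c (2*k+a+i) : ℚ)-2|
      + (b:ℚ)*|(loc k a c (2*k+a+i) : ℚ) - (2*(k:ℚ)-1)|)
      = c*((2*(k:ℚ)*(2*(k:ℚ)-1)/2 - 4*(k:ℚ) + 6) + (a:ℚ)*2 + (c:ℚ)*0 + (b:ℚ)*(2*(k:ℚ)-3)) := by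
    rw [Finset.sum_congr rfl (fun i hi => by
        rw [loc_C (mem_range.mp hi)]; push_cast
        rw [h2', show |(2:ℚ)| = 2 by norm_num,
          show |(2:ℚ) - 2| = 0 by norm_num,
          show |(2:ℚ) - (2*(k:ℚ)-1)| = 2*(k:ℚ)-3 by
            rw [show (2:ℚ) - (2*(k:ℚ)-1) = -(2*(k:ℚ)-3) by ring, abs_neg]
            exact abs_of_nonneg (by linarith)] :
      ∀ i ∈ range c, ((∑ j ∈ range (2*k), |(loc k a c (2*k+a+i) : ℚ) - (j:ℚ)|)
        + (a:ℚ)*|(loc k a c (2*k+a+i) : ℚ)| + (c:ℚ)*|(loc k a c (2*k+a+i) : ℚ)-2|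
        + (b:ℚ)*|(loc k a c (2*k+a+i) : ℚ) - (2*(k:ℚ)-1)|)
        = (2*(k:ℚ)*(2*(k:ℚ)-1)/2 - 4*(k:ℚ) + 6) + (a:ℚ)*2 + (c:ℚ)*0 + (b:ℚ)*(2*(k:ℚ)-3)),
      Finset.sum_const, Finset.card_range, nsmul_eq_mul]
    try ring
  -- chunk 4 : pendants at v_{2k}
  have hcast : ((2*k-1 : ℕ):ℚ) = 2*(k:ℚ)-1 := by
    rw [Nat.cast_sub (by omega : 1 ≤ 2*k)]; push_cast; ring
  have hc4 : ∑ i ∈ range b, ((∑ j ∈ range (2*k), |(loc k a c (2*k+a+c+i) : ℚ) - (j:ℚ)|)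
      + (a:ℚ)*|(loc k a c (2*k+a+c+i) : ℚ)| + (c:ℚ)*|(loc k a c (2*k+a+c+i) : ℚ)-2|
      + (b:ℚ)*|(loc k a c (2*k+a+c+i) : ℚ) - (2*(k:ℚ)-1)|)
      = b*((2*(k:ℚ)*(2*(k:ℚ)-1)/2) + a*(2*(k:ℚ)-1) + c*(2*(k:ℚ)-3)) := by
    rw [Finset.sum_congr rfl (fun i hi => by
        rw [loc_B, hcast]
        rw [hE', show |2*(k:ℚ)-1| = 2*(k:ℚ)-1 from abs_of_nonneg (by linarith),
          show |(2*(k:ℚ)-1) - 2| = 2*(k:ℚ)-3 by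
            rw [show (2*(k:ℚ)-1) - 2 = 2*(k:ℚ)-3 by ring]
            exact abs_of_nonneg (by linarith),
          sub_self, abs_zero, mul_zero, add_zero] :
      ∀ i ∈ range b, ((∑ j ∈ range (2*k), |(loc k a c (2*k+a+c+i) : ℚ) - (j:ℚ)|)
        + (a:ℚ)*|(loc k a c (2*k+a+c+i) : ℚ)| + (c:ℚ)*|(loc k a c (2*k+a+c+i) : ℚ)-2|
        + (b:ℚ)*|(loc k a c (2*k+a+c+i) : ℚ) - (2*(k:ℚ)-1)|)
        = 2*(k:ℚ)*(2*(k:ℚ)-1)/2 + (a:ℚ)*(2*(k:ℚ)-1) + (c:ℚ)*(2*(k:ℚ)-3)),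
      Finset.sum_const, Finset.card_range, nsmul_eq_mul]
    try ring
  rw [hc1, hc2, hc3, hc4]
  ring

end Stmt12

open Stmt12 in
/-- the Wiener index of the above tree. -/
theorem stmt12 (k a c b : ℕ) (hk : 2 ≤ k) (n : ℕ) (hn : n = 2 * k + a + c + b) :
    wiener (T12 k a c b)
      = -2 * (a : ℚ) ^ 2 + 2 * ((n : ℚ) - 3) * a
        - (2 * (k : ℚ) - 3) * (b : ℚ) ^ 2 + (2 * (k : ℚ) - 3) * ((n : ℚ) - 2 * k + 2) * b
        + (n : ℚ) ^ 2 + (2 * (k : ℚ) - 5) * ((k : ℚ) - 1) * n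
        - 1 / 3 * k * (8 * (k : ℚ) ^ 2 - 30 * k + 31) := by
  subst hn
  rw [wiener]
  have h1 : (∑ u : Fin (2*k+a+c+b), ∑ v : Fin (2*k+a+c+b), ((T12 k a c b).dist u v : ℚ))
      = ∑ i ∈ range (2*k+a+c+b), ∑ j ∈ range (2*k+a+c+b), ((Dn k a c i j : ℕ):ℚ) := by
    rw [← Fin.sum_univ_eq_sum_range (fun i => ∑ j ∈ range (2*k+a+c+b), ((Dn k a c i j : ℕ):ℚ))
      (2*k+a+c+b)]
    refine Finset.sum_congr rfl fun u _ => ?_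
    rw [← Fin.sum_univ_eq_sum_range (fun j => ((Dn k a c u.val j : ℕ):ℚ)) (2*k+a+c+b)]
    exact Finset.sum_congr rfl fun v _ => by rw [dist_eq hk]
  have hT : (∑ u : Fin (2 * k + a + c + b), ∑ v : Fin (2 * k + a + c + b),
      ((T12 k a c b).dist u v : ℚ)) = (∑ u : Fin (2*k+a+c+b), ∑ v : Fin (2*k+a+c+b),
      ((T12 k a c b).dist u v : ℚ)) := by norm_num
  rw [hT, h1]
  have h2 : ∑ i ∈ range (2*k+a+c+b), ∑ j ∈ range (2*k+a+c+b), ((Dn k a c i j : ℕ):ℚ)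
      = (∑ i ∈ range (2*k+a+c+b), ∑ j ∈ range (2*k+a+c+b),
          |(loc k a c i : ℚ) - (loc k a c j : ℚ)|)
        + ∑ i ∈ range (2*k+a+c+b), ∑ j ∈ range (2*k+a+c+b),
          (if i = j then (0:ℚ) else (ext k i : ℚ) + (ext k j : ℚ)) := by
    rw [← Finset.sum_add_distrib]
    refine Finset.sum_congr rfl fun i _ => ?_
    rw [← Finset.sum_add_distrib]
    exact Finset.sum_congr rfl fun j _ => cast_Dn i j
  rw [h2, sumL hk, sumE]
  push_cast
  ring
end

section
/- Let T be a tree of order n obtained from the path P_{2k} = v_1v_2...v_{2k} (k ≥ 2) by attaching n−2k pendent vertices to vertices of the path other than v_2, with at most (n−2k+1)/k of them attached to v_1. Then μ(T) < k + 1/2 + 4(k−1)/k². -/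
/-!
Project every vertex `v` to its anchor `a v` on the path `p` (`p i` is the paper's `v_{i+1}`):
`v` itself, or the path vertex it hangs from. Then `d(u, v) ≤ |a u - a v| + [u ∉ p] + [v ∉ p]`,
and summing `|a u - a v|` over ordered pairs counts, for each path edge `p t p (t+1)`, the
`2 L_t (n - L_t)` pairs it separates, where `L_t = #{v | a v ≤ t}`. Hence
`W(T) ≤ ∑_t L_t (n - L_t) + n (n - 2k)`. With `x - 1` pendent vertices at `v_1` and none at `v_2`
the first two cuts are `x (n - x)` and `(x + 1) (n - x - 1)`, and each of the other `2k - 3` is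
at most `n² / 4`; the bound on `x` turns this into the claimed bound.
-/

open SimpleGraph Finset

theorem sum_sum_tsub_eq_sum_card_mul_card {α : Type*} [Fintype α] (f : α → ℕ) {N : ℕ}
    (hf : ∀ x, f x ≤ N) :
    ∑ u, ∑ v, (f v - f u) = ∑ t ∈ range N, #{u | f u ≤ t} * #{v | t < f v} := by
  have hIco : ∀ u v, f v - f u = ∑ t ∈ range N, if f u ≤ t ∧ t < f v then 1 else 0 := by
    intro u v
    rw [sum_boole, Nat.cast_id, ← Nat.card_Ico]
    congr 1
    ext t
    simp only [mem_filter, mem_range, mem_Ico]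
    have := hf v
    omega
  simp_rw [hIco, card_filter, sum_mul_sum, ite_zero_mul_ite_zero, one_mul]
  exact (sum_congr rfl fun _ _ => sum_comm).trans sum_comm

theorem sum_range_mul_sub_le (g : ℕ → ℚ) (n : ℚ) {N : ℕ} (hN : 3 ≤ N)
    (htop : g (N - 1) = n) :
    ∑ t ∈ range N, g t * (n - g t) ≤
      g 0 * (n - g 0) + g 1 * (n - g 1) + (N - 3) * (n ^ 2 / 4) := by
  obtain ⟨M, rfl⟩ : ∃ M, N = M + 3 := ⟨N - 3, by omega⟩
  have hmid : ∑ t ∈ range M, g (t + 2) * (n - g (t + 2)) ≤ M * (n ^ 2 / 4) := by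
    have := sum_le_card_nsmul (range M) (fun t => g (t + 2) * (n - g (t + 2))) (n ^ 2 / 4)
      fun t _ => by nlinarith [sq_nonneg (n - 2 * g (t + 2))]
    rwa [card_range, nsmul_eq_mul] at this
  rw [show M + 3 - 1 = M + 2 by omega] at htop
  rw [sum_range_succ, sum_range_succ', sum_range_succ', htop]
  push_cast
  linarith

theorem cut_bound_lt (k n x : ℚ) (hk : 2 ≤ k) (hn : 2 * k ≤ n) (hx : 1 ≤ x)
    (hxk : k * x ≤ n - k + 1) :
    x * (n - x) + (x + 1) * (n - (x + 1)) + (2 * k - 3) * (n ^ 2 / 4) + n * (n - 2 * k)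
      < n * (n - 1) / 2 * (k + 1 / 2 + 4 * (k - 1) / k ^ 2) := by
  have hk0 : 0 < k := by linarith
  have hb : k + 1 / 2 + 4 * (k - 1) / k ^ 2 =
      (4 * k ^ 3 + 2 * k ^ 2 + 16 * k - 16) / (4 * k ^ 2) := by
    field_simp
    ring
  rw [hb, div_mul_div_comm, lt_div_iff₀ (by positivity)]
  -- `x (n - x)` is increasing on `x ≤ n / 2`, so it is at most its value at `(n - k + 1) / k`.
  have hmono : 0 ≤ (n - k + 1 - k * x) * (k * n - (n - k + 1) - k * x) := by
    apply mul_nonneg <;> nlinarith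
  have hpoly : 0 ≤ 6 * k ^ 3 + 3 * k ^ 2 - 24 * k + 24 := by nlinarith
  nlinarith [mul_nonneg (sub_nonneg.2 hn) hpoly, mul_pos hk0 hk0, mul_pos (mul_pos hk0 hk0) hk0,
    mul_nonneg (sub_nonneg.2 hn) (sub_nonneg.2 hk), mul_nonneg (sub_nonneg.2 hx) (sub_nonneg.2 hk)]

namespace SimpleGraph

variable {V : Type*} {G : SimpleGraph V} {N : ℕ} {p : Fin N → V}

theorem Connected.dist_le_of_adj_succ (hG : G.Connected)
    (hp : ∀ i j : Fin N, (i : ℕ) + 1 = j → G.Adj (p i) (p j)) (i j : Fin N) :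
    G.dist (p i) (p j) ≤ ((i : ℕ) - j) + ((j : ℕ) - i) := by
  suffices h : ∀ d (i j : Fin N), (i : ℕ) + d = j → G.dist (p i) (p j) ≤ d by
    rcases le_total (i : ℕ) j with hij | hij
    · have := h _ i j (Nat.add_sub_cancel' hij); omega
    · have := h _ j i (Nat.add_sub_cancel' hij); rw [dist_comm] at this; omega
  intro d
  induction d with
  | zero =>
    intro i j h
    obtain rfl : i = j := Fin.ext h
    simp
  | succ d ih =>
    intro i j h
    let m : Fin N := ⟨i + d, by omega⟩
    calc G.dist (p i) (p j) ≤ G.dist (p i) (p m) + G.dist (p m) (p j) := hG.dist_triangle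
      _ ≤ d + 1 :=
        add_le_add (ih i m rfl) (dist_eq_one_iff_adj.2 (hp m j (by simp [m]; omega))).le

theorem Connected.dist_le_via_path (hG : G.Connected)
    (hp : ∀ i j : Fin N, (i : ℕ) + 1 = j → G.Adj (p i) (p j)) (a : V → Fin N) (u v : V) :
    G.dist u v ≤
      G.dist u (p (a u)) + (((a u : ℕ) - a v) + ((a v : ℕ) - a u)) + G.dist v (p (a v)) := by
  calc G.dist u v ≤ G.dist u (p (a u)) + G.dist (p (a u)) v := hG.dist_triangle
    _ ≤ G.dist u (p (a u)) + (G.dist (p (a u)) (p (a v)) + G.dist (p (a v)) v) :=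
        add_le_add_right hG.dist_triangle _
    _ ≤ _ := by
        rw [dist_comm (u := p (a v)), ← add_assoc]
        gcongr
        exact hG.dist_le_of_adj_succ hp _ _

structure IsPathProjection (G : SimpleGraph V) (p : Fin N → V) (a : V → Fin N) : Prop where
  apply_path : ∀ i, a (p i) = i
  adj_path : ∀ v, (∀ j, v ≠ p j) → G.Adj v (p (a v))

theorem exists_isPathProjection (hinj : Function.Injective p)
    (h : ∀ v, (∀ j, v ≠ p j) → ∃ i, G.Adj v (p i)) : ∃ a, IsPathProjection G p a := by
  have hsel : ∀ v, ∃ i, v = p i ∨ ((∀ j, v ≠ p j) ∧ G.Adj v (p i)) := by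
    intro v
    by_cases hv : ∀ j, v ≠ p j
    · obtain ⟨i, hi⟩ := h v hv
      exact ⟨i, .inr ⟨hv, hi⟩⟩
    · push Not at hv
      obtain ⟨i, hi⟩ := hv
      exact ⟨i, .inl hi⟩
  choose a ha using hsel
  refine ⟨a, fun i => ?_, fun v hv => ?_⟩
  · rcases ha (p i) with h | h
    · exact (hinj h).symm
    · exact absurd rfl (h.1 i)
  · rcases ha v with h | h
    · exact absurd h (hv _)
    · exact h.2

namespace IsPathProjection

variable {a : V → Fin N}

theorem eq_of_apply_eq (ha : IsPathProjection G p a) {v : V} {i : Fin N} (hv : a v = i)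
    (hi : ∀ w, (∀ j, w ≠ p j) → ¬ G.Adj w (p i)) : v = p i := by
  by_contra hne
  have hoff : ∀ j, v ≠ p j := by
    rintro j rfl
    exact hne (by rw [← hv, ha.apply_path])
  exact hi v hoff (hv ▸ ha.adj_path v hoff)

theorem card_fiber_le [Fintype V] (ha : IsPathProjection G p a) (i : Fin N) :
    #{v | a v = i} ≤ {v | (∀ j, v ≠ p j) ∧ G.Adj v (p i)}.ncard + 1 := by
  classical
  rw [Set.ncard_eq_toFinset_card', Set.toFinset_ofPred]
  refine (card_le_card fun v hv => ?_).trans (card_insert_le (p i) _)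
  simp only [mem_filter, mem_univ, true_and, mem_insert] at hv ⊢
  by_cases hoff : ∀ j, v ≠ p j
  · exact .inr ⟨hoff, hv ▸ ha.adj_path v hoff⟩
  · push Not at hoff
    obtain ⟨j, rfl⟩ := hoff
    exact .inl (by rw [← hv, ha.apply_path])

theorem card_index_le_succ [Fintype V] (ha : IsPathProjection G p a) {t : ℕ} (ht : t + 1 < N)
    (hi : ∀ w, (∀ j, w ≠ p j) → ¬ G.Adj w (p ⟨t + 1, ht⟩)) :
    #{v | (a v : ℕ) ≤ t + 1} = #{v | (a v : ℕ) ≤ t} + 1 := by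
  classical
  have hnot : p ⟨t + 1, ht⟩ ∉ ({v | (a v : ℕ) ≤ t} : Finset V) := by simp [ha.apply_path]
  rw [← card_insert_of_notMem hnot]
  congr 1
  ext v
  simp only [mem_filter, mem_univ, true_and, mem_insert]
  constructor
  · intro hv
    rcases Nat.lt_or_eq_of_le hv with hv | hv
    · exact .inr (by omega)
    · exact .inl (ha.eq_of_apply_eq (Fin.ext hv) hi)
  · rintro (rfl | hv)
    · simp [ha.apply_path]
    · omega

theorem sum_dist_eq [Fintype V] (ha : IsPathProjection G p a) (hinj : Function.Injective p) :
    ∑ v, G.dist v (p (a v)) = Fintype.card V - N := by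
  classical
  rw [← sum_compl_add_sum (univ.image p), sum_image fun i _ j _ h => hinj h]
  simp only [ha.apply_path, dist_self, sum_const_zero, add_zero]
  have hone : ∀ v ∈ (univ.image p)ᶜ, G.dist v (p (a v)) = 1 := fun v hv =>
    dist_eq_one_iff_adj.2 (ha.adj_path v (by simpa [eq_comm] using hv))
  rw [sum_congr rfl hone, sum_const, smul_eq_mul, mul_one, card_compl,
    card_image_of_injective _ hinj, card_univ, Fintype.card_fin]

theorem sum_sum_dist_le [Fintype V] (ha : IsPathProjection G p a) (hG : G.Connected)
    (hp : ∀ i j : Fin N, (i : ℕ) + 1 = j → G.Adj (p i) (p j)) (hinj : Function.Injective p) :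
    ∑ u, ∑ v, G.dist u v ≤
      2 * ∑ t ∈ range N, #{v | (a v : ℕ) ≤ t} * #{v | t < (a v : ℕ)}
      + 2 * (Fintype.card V * (Fintype.card V - N)) := by
  have hcut := sum_sum_tsub_eq_sum_card_mul_card (fun v => (a v : ℕ)) fun v => (a v).isLt.le
  have hcut' : ∑ u, ∑ v, ((a u : ℕ) - a v) = ∑ u, ∑ v, ((a v : ℕ) - a u) := sum_comm
  calc ∑ u, ∑ v, G.dist u v ≤ ∑ u, ∑ v, (G.dist u (p (a u))
          + (((a u : ℕ) - a v) + ((a v : ℕ) - a u)) + G.dist v (p (a v))) :=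
        sum_le_sum fun u _ => sum_le_sum fun v _ => hG.dist_le_via_path hp a u v
    _ = _ := by
        simp only [sum_add_distrib, sum_const, card_univ, smul_eq_mul, ← mul_sum]
        rw [hcut', hcut, ha.sum_dist_eq hinj]
        ring

theorem wiener_le [Fintype V] (ha : IsPathProjection G p a) (hG : G.Connected)
    (hp : ∀ i j : Fin N, (i : ℕ) + 1 = j → G.Adj (p i) (p j)) (hinj : Function.Injective p) :
    wiener G ≤ ∑ t ∈ range N,
        (#{v | (a v : ℕ) ≤ t} : ℚ) * (Fintype.card V - #{v | (a v : ℕ) ≤ t})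
      + Fintype.card V * (Fintype.card V - N : ℕ) := by
  have hcompl : ∀ t,
      (#{v | t < (a v : ℕ)} : ℚ) = Fintype.card V - #{v | (a v : ℕ) ≤ t} := by
    intro t
    rw [eq_sub_iff_add_eq, ← Nat.cast_add, add_comm]
    simp only [← not_le]
    rw [card_filter_add_card_filter_not, card_univ]
  simp_rw [← hcompl]
  rw [wiener, div_le_iff₀ two_pos]
  exact_mod_cast (ha.sum_sum_dist_le hG hp hinj).trans_eq (by ring)

end IsPathProjection

end SimpleGraph

/-- tree from `P_{2k}` with pendent vertices attached to path vertices
other than `v_2`, at most `(n-2k+1)/k` of them at `v_1`. -/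
theorem stmt13 {V : Type*} [Fintype V] (T : SimpleGraph V) (hT : T.IsTree)
    (n k : ℕ) (hk : 2 ≤ k) (hn : 2 * k ≤ n) (hcard : Fintype.card V = n)
    (p : Fin (2 * k) → V) (hinj : Function.Injective p)
    (hpath : ∀ i j, T.Adj (p i) (p j) ↔ ((i : ℕ) + 1 = (j : ℕ) ∨ (j : ℕ) + 1 = (i : ℕ)))
    (hout : ∀ v, (∀ i, v ≠ p i) →
      (T.neighborSet v).ncard = 1 ∧ ∀ u, T.Adj v u → ∃ i, u = p i)
    (hnot2 : ∀ v, (∀ i, v ≠ p i) → ¬ T.Adj v (p ⟨1, by omega⟩))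
    (hv1 : ({v | (∀ i, v ≠ p i) ∧ T.Adj v (p ⟨0, by omega⟩)}.ncard : ℚ) ≤ ((n : ℚ) - 2 * k + 1) / k) :
    avgDist T < (k : ℚ) + 1 / 2 + 4 * ((k : ℚ) - 1) / (k : ℚ) ^ 2 := by
  obtain ⟨a, ha⟩ := exists_isPathProjection hinj fun v hv => by
    obtain ⟨u, hu⟩ := Set.nonempty_of_ncard_ne_zero ((hout v hv).1 ▸ one_ne_zero)
    obtain ⟨i, rfl⟩ := (hout v hv).2 u hu
    exact ⟨i, hu⟩
  have hW := ha.wiener_le hT.connected (fun i j h => (hpath i j).2 (.inl h)) hinj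
  set L : ℕ → ℕ := fun t => #{v | (a v : ℕ) ≤ t} with hL
  set A := {v | (∀ i, v ≠ p i) ∧ T.Adj v (p ⟨0, by omega⟩)}.ncard
  have hL0_pos : 1 ≤ L 0 := card_pos.2 ⟨p ⟨0, by omega⟩, by simp [ha.apply_path]⟩
  have hL0 : L 0 ≤ A + 1 := by
    calc L 0 = #{v | a v = ⟨0, by omega⟩} := by simp [hL, Fin.ext_iff]
      _ ≤ _ := ha.card_fiber_le _
  have hL1 : L 1 = L 0 + 1 := ha.card_index_le_succ (t := 0) (by omega) hnot2
  have hLtop : L (2 * k - 1) = n := by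
    show #{v | (a v : ℕ) ≤ 2 * k - 1} = n
    rw [filter_true_of_mem fun v _ => Nat.le_sub_one_of_lt (a v).isLt, card_univ, hcard]
  have hsum :=
    sum_range_mul_sub_le (fun t => (L t : ℚ)) n (N := 2 * k) (by omega) (by simp [hLtop])
  have hxk : (k : ℚ) * L 0 ≤ n - k + 1 := by
    have h1 := (le_div_iff₀ (by positivity)).1 hv1
    have h0 : (L 0 : ℚ) ≤ A + 1 := by exact_mod_cast hL0
    nlinarith
  have hkey := cut_bound_lt k n (L 0) (by exact_mod_cast hk) (by exact_mod_cast hn)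
    (by exact_mod_cast hL0_pos) hxk
  have hn1 : (1 : ℚ) < n := by exact_mod_cast (by omega : 1 < n)
  rw [avgDist, hcard, Nat.cast_choose_two, div_lt_iff₀ (by nlinarith)]
  rw [hcard, Nat.cast_sub hn] at hW
  simp only [hL1] at hsum
  push_cast at hW hsum hkey ⊢
  linarith
end
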